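/- arXiv:math/0204277 — 4 statements merged into one kernel-verified Lean document; each statement's English description precedes it below -/
import Mathlib

section
/- Let n ≥ 2 and let ω be a SAP of length 2n in Z². Among the 4n representatives ρ ∈ {T^j ω, (T^j ω)^R : 0 ≤ j ≤ 2n−1} of the equivalence class of ω, the number of ρ such that the translate ρ − ρ_0 belongs to Γ^+_{2n} is either 0 or 2; it equals 2 if and only if the set of vertices of ω of minimal second coordinate consists of exactly two points and these two points are joined by an edge of ω (i.e., ω has a unique horizontal bond at the minimal height and no other vertex at that height). -/
/-- Two points of `ℤ²` are nearest neighbors. -/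
def Nbr (p q : ℤ × ℤ) : Prop := |q.1 - p.1| + |q.2 - p.2| = 1

/-- A self-avoiding polygon of length `2n` in `ℤ²`: a nearest-neighbor closed loop
`ω_0, …, ω_{2n} = ω_0` with `ω_0, …, ω_{2n-1}` pairwise distinct. -/
def IsSAP (n : ℕ) (ω : Fin (2 * n + 1) → ℤ × ℤ) : Prop :=
  (∀ (i : ℕ) (h : i + 1 < 2 * n + 1), Nbr (ω ⟨i, Nat.lt_of_succ_lt h⟩) (ω ⟨i + 1, h⟩)) ∧
    ω (Fin.last (2 * n)) = ω 0 ∧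
    ∀ j k : Fin (2 * n + 1), j.val < 2 * n → k.val < 2 * n → ω j = ω k → j = k

/-- `rotSAP n j ω` is the rotation `T^j ω` of the polygon `ω`, traversing the same
cyclic sequence of points starting from `ω_j` (indices mod `2n`). -/
def rotSAP (n j : ℕ) (ω : Fin (2 * n + 1) → ℤ × ℤ) : Fin (2 * n + 1) → ℤ × ℤ :=
  fun i =>
    if h : 0 < 2 * n then ω ⟨(i.val + j) % (2 * n), Nat.lt_succ_of_lt (Nat.mod_lt _ h)⟩
    else ω i

/-- `revW m ω` is the reversal `ω^R` of the walk `ω` with `m+1` vertices. -/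
def revW (m : ℕ) (ω : Fin (m + 1) → ℤ × ℤ) : Fin (m + 1) → ℤ × ℤ :=
  fun i => ω ⟨m - i.val, Nat.lt_succ_of_le (Nat.sub_le m i.val)⟩

/-- `repSAP n j r ω` is the representative `T^j ω` (if `r = false`) or
`(T^j ω)^R` (if `r = true`) of the equivalence class of `ω`. -/
def repSAP (n j : ℕ) (r : Bool) (ω : Fin (2 * n + 1) → ℤ × ℤ) : Fin (2 * n + 1) → ℤ × ℤ :=
  if r then revW (2 * n) (rotSAP n j ω) else rotSAP n j ω

/-- `Γ⁺_{2n}`: self-avoiding polygons of length `2n` rooted at the origin whose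
points `ω_1, …, ω_{2n-2}` all have strictly positive second coordinate. -/
def GammaPlus (n : ℕ) (ρ : Fin (2 * n + 1) → ℤ × ℤ) : Prop :=
  IsSAP n ρ ∧ ρ 0 = 0 ∧
    ∀ i : Fin (2 * n + 1), 1 ≤ i.val → i.val ≤ 2 * n - 2 → 0 < (ρ i).2

/-!
If `ρ - ρ₀ ∈ Γ⁺`, the first step of `ρ` goes up, and the last one, from `ρ_{2n-1}` to
`ρ_{2n} = ρ₀`, is horizontal: it cannot go down since `ρ_{2n-2}` lies strictly above `ρ₀`, and
going up would revisit `ρ₁ = ρ₀ + (0, 1)`. Hence the lowest level of `ω` is exactly the bond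
`{ρ₀, ρ_{2n-1}}`; conversely, a representative whose endpoints `ρ₀, ρ_{2n-1}` make up the whole
lowest level lies in `Γ⁺` after translation. For `n ≥ 2` a representative is determined by the
pair `(ρ₀, ρ_{2n-1})`, because the two neighbours of a vertex of `ω` are distinct. So when the
lowest level is a bond `{p, q}`, exactly two representatives qualify: the one running from `q`
round to `p`, and the one running from `p` round to `q`.
-/

open Set

section

variable {n : ℕ} {ω : Fin (2 * n + 1) → ℤ × ℤ}

lemma Nbr.symm {p q : ℤ × ℤ} (h : Nbr p q) : Nbr q p := by
  rwa [Nbr, abs_sub_comm p.1, abs_sub_comm p.2]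

lemma nbr_sub_const_iff {p q : ℤ × ℤ} (c : ℤ × ℤ) : Nbr (p - c) (q - c) ↔ Nbr p q := by
  simp [Nbr]

lemma Nbr.ne {p q : ℤ × ℤ} (h : Nbr p q) : p ≠ q := by
  rintro rfl
  simp [Nbr] at h

lemma Nbr.snd_le_add_one {p q : ℤ × ℤ} (h : Nbr p q) : p.2 ≤ q.2 + 1 := by
  unfold Nbr at h
  linarith [abs_nonneg (q.1 - p.1), neg_abs_le (q.2 - p.2)]

lemma eq_of_nbr_zero_of_snd_pos {v : ℤ × ℤ} (h : Nbr 0 v) (hv : 0 < v.2) : v = (0, 1) := by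
  simp only [Nbr, Prod.fst_zero, Prod.snd_zero, sub_zero, abs_of_pos hv] at h
  have h1 : |v.1| = 0 := by have := abs_nonneg v.1; omega
  exact Prod.ext (abs_eq_zero.mp h1) (by simp; omega)

lemma IsSAP.nbr {ρ : Fin (2 * n + 1) → ℤ × ℤ} (h : IsSAP n ρ) {i j : Fin (2 * n + 1)}
    (hij : j.val = i.val + 1) : Nbr (ρ i) (ρ j) := by
  obtain ⟨i, hi⟩ := i
  obtain ⟨j, hj⟩ := j
  subst hij
  exact h.1 i hj

lemma IsSAP.sub_const {ρ : Fin (2 * n + 1) → ℤ × ℤ} (h : IsSAP n ρ) (c : ℤ × ℤ) :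
    IsSAP n (fun i => ρ i - c) :=
  ⟨fun i hi => (nbr_sub_const_iff c).2 (h.1 i hi), by simp [h.2.1],
    fun j k hj hk hjk => h.2.2 j k hj hk (sub_left_inj.mp hjk)⟩

lemma GammaPlus.penult (hn : 2 ≤ n) {σ : Fin (2 * n + 1) → ℤ × ℤ} (hσ : GammaPlus n σ) :
    (σ ⟨2 * n - 1, by omega⟩).2 = 0 ∧ σ ⟨2 * n - 1, by omega⟩ ≠ 0 := by
  obtain ⟨hsap, h0, hpos⟩ := hσ
  set u := σ ⟨2 * n - 1, by omega⟩
  have hu : Nbr u 0 := by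
    rw [← h0, ← hsap.2.1]
    exact hsap.nbr (by simp; omega)
  have hprev : (σ ⟨2 * n - 2, by omega⟩).2 ≤ u.2 + 1 := (hsap.nbr (by simp; omega)).snd_le_add_one
  have hprev_pos := hpos ⟨2 * n - 2, by omega⟩ (by simp; omega) le_rfl
  have hu_nonpos : u.2 ≤ 0 := by
    by_contra! hu_pos
    -- otherwise `u` would be the vertex `σ 1` directly above the origin
    have hup : u = σ ⟨1, by omega⟩ := by
      rw [eq_of_nbr_zero_of_snd_pos hu.symm hu_pos,
        eq_of_nbr_zero_of_snd_pos (h0 ▸ hsap.nbr rfl) (hpos _ le_rfl (by simp; omega))]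
    have : 2 * n - 1 = 1 := congrArg Fin.val (hsap.2.2 _ _ (by simp; omega) (by simp; omega) hup)
    omega
  exact ⟨by omega, hu.ne⟩

def lowestPoints (s : Set (ℤ × ℤ)) : Set (ℤ × ℤ) :=
  {x ∈ s | ∀ y ∈ s, x.2 ≤ y.2}

lemma lowestPoints_range {ι : Type*} (ω : ι → ℤ × ℤ) :
    lowestPoints (range ω) = {x | x ∈ range ω ∧ ∀ i, x.2 ≤ (ω i).2} := by
  simp only [lowestPoints, forall_mem_range]

lemma lowestPoints_of_gammaPlus_sub (hn : 2 ≤ n) {ρ : Fin (2 * n + 1) → ℤ × ℤ}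
    (hρ : GammaPlus n (fun i => ρ i - ρ 0)) :
    ρ 0 ≠ ρ ⟨2 * n - 1, by omega⟩ ∧
      lowestPoints (range ρ) = {ρ 0, ρ ⟨2 * n - 1, by omega⟩} := by
  obtain ⟨hpen, hne⟩ := hρ.penult hn
  simp only [Prod.snd_sub, sub_eq_zero, ne_eq] at hpen hne
  have hlevel : ∀ k, ρ k = ρ 0 ∨ ρ k = ρ ⟨2 * n - 1, by omega⟩ ∨ (ρ 0).2 < (ρ k).2 := by
    rintro ⟨k, hk⟩
    obtain rfl | rfl | rfl | ⟨h1, h2⟩ :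
        k = 0 ∨ k = 2 * n - 1 ∨ k = 2 * n ∨ (1 ≤ k ∧ k ≤ 2 * n - 2) := by omega
    · exact Or.inl rfl
    · exact Or.inr (Or.inl rfl)
    · exact Or.inl (sub_left_inj.mp hρ.1.2.1)
    · have := hρ.2.2 ⟨k, hk⟩ h1 h2
      simp only [Prod.snd_sub, sub_pos] at this
      exact Or.inr (Or.inr this)
  have hmin : ∀ k, (ρ 0).2 ≤ (ρ k).2 := fun k => by
    rcases hlevel k with h | h | h
    · rw [h]
    · rw [h, hpen]
    · exact h.le
  refine ⟨Ne.symm hne, Set.ext fun x => ⟨?_, ?_⟩⟩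
  · rintro ⟨⟨k, rfl⟩, hlow⟩
    rcases hlevel k with h | h | h
    · exact Or.inl h
    · exact Or.inr h
    · exact absurd (hlow _ (mem_range_self 0)) (not_le.mpr h)
  · rw [lowestPoints_range]
    rintro (rfl | rfl)
    · exact ⟨mem_range_self _, hmin⟩
    · exact ⟨mem_range_self _, hpen ▸ hmin⟩

lemma gammaPlus_sub_of_lowestPoints {ρ : Fin (2 * n + 1) → ℤ × ℤ} (hρ : IsSAP n ρ)
    (hL : lowestPoints (range ρ) = {ρ 0, ρ ⟨2 * n - 1, by omega⟩}) :
    GammaPlus n (fun i => ρ i - ρ 0) := by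
  refine ⟨hρ.sub_const _, sub_self _, fun k hk1 hk2 => ?_⟩
  have h0 : ρ 0 ∈ lowestPoints (range ρ) := hL ▸ mem_insert _ _
  have hk : ρ k ∉ lowestPoints (range ρ) := by
    rw [hL]
    rintro (h | h) <;>
    · have := congrArg Fin.val (hρ.2.2 _ _ (by omega) (by simp; omega) h)
      simp only [Fin.val_zero] at this
      omega
  obtain ⟨_, ⟨i, rfl⟩, hi⟩ : ∃ y ∈ range ρ, y.2 < (ρ k).2 := by
    by_contra! h
    exact hk ⟨mem_range_self k, h⟩
  simp only [Prod.snd_sub, sub_pos]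
  exact (h0.2 _ (mem_range_self i)).trans_lt hi

/-- The vertex `ω_l` of the closed polygon `ω`, with the index `l` read modulo `2n`. -/
def cyc (n : ℕ) (ω : Fin (2 * n + 1) → ℤ × ℤ) (l : ℕ) : ℤ × ℤ :=
  if h : 0 < 2 * n then ω ⟨l % (2 * n), Nat.lt_succ_of_lt (Nat.mod_lt _ h)⟩ else ω 0

lemma cyc_of_pos (hn : 0 < n) (l : ℕ) :
    cyc n ω l = ω ⟨l % (2 * n), Nat.lt_succ_of_lt (Nat.mod_lt _ (by omega))⟩ :=
  dif_pos (by omega)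

lemma cyc_congr (hn : 0 < n) {a b : ℕ} (h : (a : ZMod (2 * n)) = b) : cyc n ω a = cyc n ω b := by
  rw [ZMod.natCast_eq_natCast_iff'] at h
  simp only [cyc_of_pos hn, h]

lemma cyc_val (hn : 0 < n) (hω : IsSAP n ω) (k : Fin (2 * n + 1)) : cyc n ω k = ω k := by
  rw [cyc_of_pos hn]
  obtain ⟨k, hk⟩ := k
  obtain hk' | rfl : k < 2 * n ∨ k = 2 * n := by omega
  · simp only [Nat.mod_eq_of_lt hk']
  · simp only [Nat.mod_self]
    exact hω.2.1.symm

lemma cyc_eq_cyc_iff (hn : 0 < n) (hω : IsSAP n ω) {a b : ℕ} :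
    cyc n ω a = cyc n ω b ↔ (a : ZMod (2 * n)) = b := by
  refine ⟨fun h => ?_, cyc_congr hn⟩
  rw [cyc_of_pos hn, cyc_of_pos hn] at h
  rw [ZMod.natCast_eq_natCast_iff']
  exact congrArg Fin.val (hω.2.2 _ _ (Nat.mod_lt _ (by omega)) (Nat.mod_lt _ (by omega)) h)

lemma eq_of_natCast_eq {m a b : ℕ} (ha : a < m) (hb : b < m) (h : (a : ZMod m) = b) : a = b := by
  rwa [ZMod.natCast_eq_natCast_iff', Nat.mod_eq_of_lt ha, Nat.mod_eq_of_lt hb] at h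

lemma two_mul_natCast_self : (2 * n : ZMod (2 * n)) = 0 := by
  exact_mod_cast ZMod.natCast_self (2 * n)

lemma exists_bond_cyc (hn : 0 < n) (hω : IsSAP n ω) (l : ℕ) :
    ∃ i : Fin (2 * n), ω ⟨i.val, Nat.lt_succ_of_lt i.isLt⟩ = cyc n ω l ∧
      ω ⟨i.val + 1, Nat.succ_lt_succ i.isLt⟩ = cyc n ω (l + 1) := by
  refine ⟨⟨l % (2 * n), Nat.mod_lt _ (by omega)⟩, (cyc_of_pos hn l).symm, ?_⟩
  rw [← cyc_val hn hω]
  exact cyc_congr hn (by push_cast; rw [ZMod.natCast_mod])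

lemma nbr_cyc_succ (hn : 0 < n) (hω : IsSAP n ω) (l : ℕ) :
    Nbr (cyc n ω l) (cyc n ω (l + 1)) := by
  obtain ⟨i, h0, h1⟩ := exists_bond_cyc hn hω l
  rw [← h0, ← h1]
  exact hω.1 i _

lemma cyc_pred_ne_cyc_succ (hn : 2 ≤ n) (hω : IsSAP n ω) (l : ℕ) :
    cyc n ω (2 * n - 1 + l) ≠ cyc n ω (l + 1) := by
  rw [ne_eq, cyc_eq_cyc_iff (by omega) hω]
  push_cast [show 1 ≤ 2 * n by omega]
  intro h
  have h2 : ((2 : ℕ) : ZMod (2 * n)) = 0 := by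
    push_cast
    linear_combination (-1 : ZMod (2 * n)) * h + two_mul_natCast_self
  rw [ZMod.natCast_eq_zero_iff] at h2
  have := Nat.le_of_dvd two_pos h2
  omega

lemma rotSAP_apply (hn : 0 < n) (j : ℕ) (i : Fin (2 * n + 1)) :
    rotSAP n j ω i = cyc n ω (i + j) := by
  simp only [rotSAP, cyc, dif_pos (show 0 < 2 * n by omega)]

lemma revW_apply (m : ℕ) (ρ : Fin (m + 1) → ℤ × ℤ) (i : Fin (m + 1)) :
    revW m ρ i = ρ ⟨m - i, Nat.lt_succ_of_le (Nat.sub_le m i)⟩ := rfl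

lemma IsSAP.rotSAP (hn : 0 < n) (hω : IsSAP n ω) (j : ℕ) : IsSAP n (rotSAP n j ω) := by
  refine ⟨fun i hi => ?_, ?_, fun a b ha hb hab => ?_⟩
  · simp only [rotSAP_apply hn, add_right_comm i 1 j]
    exact nbr_cyc_succ hn hω _
  · simp only [rotSAP_apply hn]
    exact cyc_congr hn (by simp)
  · simp only [rotSAP_apply hn, cyc_eq_cyc_iff hn hω, Nat.cast_add, add_left_inj] at hab
    exact Fin.ext (eq_of_natCast_eq ha hb hab)

lemma IsSAP.revW {ρ : Fin (2 * n + 1) → ℤ × ℤ} (hn : 0 < n) (hρ : IsSAP n ρ) :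
    IsSAP n (revW (2 * n) ρ) := by
  refine ⟨fun i hi => (hρ.nbr (by simp; omega)).symm, by simp [revW_apply]; exact hρ.2.1.symm,
    fun a b ha hb hab => ?_⟩
  rw [revW_apply, revW_apply, ← cyc_val hn hρ, ← cyc_val hn hρ, cyc_eq_cyc_iff hn hρ] at hab
  push_cast [ha.le, hb.le] at hab
  exact Fin.ext (eq_of_natCast_eq ha hb (by linear_combination -hab))

lemma range_rotSAP (hn : 0 < n) (hω : IsSAP n ω) (j : ℕ) : range (rotSAP n j ω) = range ω := by
  refine Subset.antisymm (range_subset_iff.2 fun i => ?_) (range_subset_iff.2 fun k => ?_)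
  · rw [rotSAP_apply hn, cyc_of_pos hn]
    exact mem_range_self _
  · have : NeZero (2 * n) := ⟨by omega⟩
    set i := ((k : ℕ) - j : ZMod (2 * n)).val
    refine ⟨⟨i, Nat.lt_succ_of_lt (ZMod.val_lt _)⟩, ?_⟩
    rw [rotSAP_apply hn, ← cyc_val hn hω]
    exact cyc_congr hn (by simp [i])

lemma range_revW (m : ℕ) (ρ : Fin (m + 1) → ℤ × ℤ) : range (revW m ρ) = range ρ := by
  refine Subset.antisymm (range_subset_iff.2 fun i => mem_range_self _)
    (range_subset_iff.2 fun k => ⟨⟨m - k, by omega⟩, ?_⟩)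
  rw [revW_apply]
  exact congrArg ρ (Fin.ext (by simp only; omega))

def IsRep (n : ℕ) (ω ρ : Fin (2 * n + 1) → ℤ × ℤ) : Prop :=
  ∃ j < 2 * n, ρ = repSAP n j false ω ∨ ρ = repSAP n j true ω

def halfPlaneReps (n : ℕ) (ω : Fin (2 * n + 1) → ℤ × ℤ) : Set (Fin (2 * n + 1) → ℤ × ℤ) :=
  {ρ | IsRep n ω ρ ∧ GammaPlus n (fun i => ρ i - ρ 0)}

lemma IsSAP.repSAP (hn : 0 < n) (hω : IsSAP n ω) (j : ℕ) (r : Bool) :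
    IsSAP n (repSAP n j r ω) := by
  cases r
  · exact hω.rotSAP hn j
  · exact (hω.rotSAP hn j).revW hn

lemma range_repSAP (hn : 0 < n) (hω : IsSAP n ω) (j : ℕ) (r : Bool) :
    range (repSAP n j r ω) = range ω := by
  cases r
  · exact range_rotSAP hn hω j
  · exact (range_revW _ _).trans (range_rotSAP hn hω j)

lemma repSAP_apply_zero (hn : 0 < n) (j : ℕ) (r : Bool) : repSAP n j r ω 0 = cyc n ω j := by
  cases r
  · simp [repSAP, rotSAP_apply hn]
  · simp only [repSAP, if_true, revW_apply, rotSAP_apply hn]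
    exact cyc_congr hn (by simp)

lemma repSAP_false_apply_penult (hn : 0 < n) (j : ℕ) :
    repSAP n j false ω ⟨2 * n - 1, by omega⟩ = cyc n ω (2 * n - 1 + j) := by
  simp [repSAP, rotSAP_apply hn]

lemma repSAP_true_apply_penult (hn : 0 < n) (j : ℕ) :
    repSAP n j true ω ⟨2 * n - 1, by omega⟩ = cyc n ω (j + 1) := by
  simp only [repSAP, if_true, revW_apply, rotSAP_apply hn]
  congr 1
  omega

lemma IsRep.isSAP (hn : 0 < n) (hω : IsSAP n ω) {ρ : Fin (2 * n + 1) → ℤ × ℤ}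
    (hρ : IsRep n ω ρ) : IsSAP n ρ := by
  obtain ⟨j, -, rfl | rfl⟩ := hρ <;> exact hω.repSAP hn j _

lemma IsRep.range_eq (hn : 0 < n) (hω : IsSAP n ω) {ρ : Fin (2 * n + 1) → ℤ × ℤ}
    (hρ : IsRep n ω ρ) : range ρ = range ω := by
  obtain ⟨j, -, rfl | rfl⟩ := hρ <;> exact range_repSAP hn hω j _

lemma mem_halfPlaneReps_iff (hn : 2 ≤ n) (hω : IsSAP n ω) {ρ : Fin (2 * n + 1) → ℤ × ℤ}
    (hρ : IsRep n ω ρ) :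
    ρ ∈ halfPlaneReps n ω ↔ ρ 0 ≠ ρ ⟨2 * n - 1, by omega⟩ ∧
      lowestPoints (range ω) = {ρ 0, ρ ⟨2 * n - 1, by omega⟩} := by
  rw [← hρ.range_eq (by omega) hω]
  exact ⟨fun h => lowestPoints_of_gammaPlus_sub hn h.2,
    fun h => ⟨hρ, gammaPlus_sub_of_lowestPoints (hρ.isSAP (by omega) hω) h.2⟩⟩

lemma IsRep.eq_of_endpoints (hn : 2 ≤ n) (hω : IsSAP n ω) {ρ ρ' : Fin (2 * n + 1) → ℤ × ℤ}
    (hρ : IsRep n ω ρ) (hρ' : IsRep n ω ρ') (h0 : ρ 0 = ρ' 0)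
    (h1 : ρ ⟨2 * n - 1, by omega⟩ = ρ' ⟨2 * n - 1, by omega⟩) : ρ = ρ' := by
  have hn0 : 0 < n := by omega
  obtain ⟨j, hj, rfl | rfl⟩ := hρ <;> obtain ⟨j', hj', rfl | rfl⟩ := hρ' <;>
    rw [repSAP_apply_zero hn0, repSAP_apply_zero hn0, cyc_eq_cyc_iff hn0 hω] at h0 <;>
    obtain rfl := eq_of_natCast_eq hj hj' h0 <;>
    simp only [repSAP_false_apply_penult hn0, repSAP_true_apply_penult hn0] at h1
  · rfl
  · exact absurd h1 (cyc_pred_ne_cyc_succ hn hω j)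
  · exact absurd h1.symm (cyc_pred_ne_cyc_succ hn hω j)
  · rfl

lemma IsRep.exists_bond (hn : 0 < n) (hω : IsSAP n ω) {ρ : Fin (2 * n + 1) → ℤ × ℤ}
    (hρ : IsRep n ω ρ) :
    ∃ i : Fin (2 * n),
      (ω ⟨i.val, Nat.lt_succ_of_lt i.isLt⟩ = ρ 0 ∧
          ω ⟨i.val + 1, Nat.succ_lt_succ i.isLt⟩ = ρ ⟨2 * n - 1, by omega⟩) ∨
        (ω ⟨i.val, Nat.lt_succ_of_lt i.isLt⟩ = ρ ⟨2 * n - 1, by omega⟩ ∧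
          ω ⟨i.val + 1, Nat.succ_lt_succ i.isLt⟩ = ρ 0) := by
  obtain ⟨j, -, rfl | rfl⟩ := hρ
  · obtain ⟨i, h0, h1⟩ := exists_bond_cyc hn hω (2 * n - 1 + j)
    refine ⟨i, Or.inr ⟨by rw [h0, repSAP_false_apply_penult hn], ?_⟩⟩
    rw [h1, repSAP_apply_zero hn, show 2 * n - 1 + j + 1 = 2 * n + j by omega]
    exact cyc_congr hn (by simp)
  · obtain ⟨i, h0, h1⟩ := exists_bond_cyc hn hω j
    exact ⟨i, Or.inl ⟨by rw [h0, repSAP_apply_zero hn], by rw [h1, repSAP_true_apply_penult hn]⟩⟩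

def HasLowestBond (n : ℕ) (ω : Fin (2 * n + 1) → ℤ × ℤ) : Prop :=
  ∃ p q : ℤ × ℤ, p ≠ q ∧ lowestPoints (range ω) = {p, q} ∧
    ∃ i : Fin (2 * n),
      (ω ⟨i.val, Nat.lt_succ_of_lt i.isLt⟩ = p ∧ ω ⟨i.val + 1, Nat.succ_lt_succ i.isLt⟩ = q) ∨
        (ω ⟨i.val, Nat.lt_succ_of_lt i.isLt⟩ = q ∧ ω ⟨i.val + 1, Nat.succ_lt_succ i.isLt⟩ = p)

lemma hasLowestBond_of_mem_halfPlaneReps (hn : 2 ≤ n) (hω : IsSAP n ω)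
    {ρ : Fin (2 * n + 1) → ℤ × ℤ} (hρ : ρ ∈ halfPlaneReps n ω) : HasLowestBond n ω := by
  obtain ⟨hne, hL⟩ := (mem_halfPlaneReps_iff hn hω hρ.1).1 hρ
  exact ⟨_, _, hne, hL, hρ.1.exists_bond (by omega) hω⟩

lemma ncard_halfPlaneReps_of_lowestPoints (hn : 2 ≤ n) (hω : IsSAP n ω) (a : ℕ)
    (hL : lowestPoints (range ω) = {cyc n ω a, cyc n ω (a + 1)}) :
    (halfPlaneReps n ω).ncard = 2 := by
  have hn0 : 0 < n := by omega
  set A := repSAP n ((a + 1) % (2 * n)) false ω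
  set B := repSAP n (a % (2 * n)) true ω
  have hA : IsRep n ω A := ⟨_, Nat.mod_lt _ (by omega), Or.inl rfl⟩
  have hB : IsRep n ω B := ⟨_, Nat.mod_lt _ (by omega), Or.inr rfl⟩
  have hA0 : A 0 = cyc n ω (a + 1) :=
    (repSAP_apply_zero hn0 _ _).trans (cyc_congr hn0 (ZMod.natCast_mod _ _))
  have hApen : A ⟨2 * n - 1, by omega⟩ = cyc n ω a :=
    (repSAP_false_apply_penult hn0 _).trans (cyc_congr hn0 (by
      push_cast [ZMod.natCast_mod, show 1 ≤ 2 * n by omega]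
      linear_combination two_mul_natCast_self))
  have hB0 : B 0 = cyc n ω a :=
    (repSAP_apply_zero hn0 _ _).trans (cyc_congr hn0 (ZMod.natCast_mod _ _))
  have hBpen : B ⟨2 * n - 1, by omega⟩ = cyc n ω (a + 1) :=
    (repSAP_true_apply_penult hn0 _).trans (cyc_congr hn0 (by push_cast [ZMod.natCast_mod]; rfl))
  have hne : cyc n ω a ≠ cyc n ω (a + 1) := (nbr_cyc_succ hn0 hω a).ne
  have hAB : halfPlaneReps n ω = {A, B} := by
    ext ρ
    refine ⟨fun hρ => ?_, ?_⟩
    · obtain ⟨-, hpair⟩ := (mem_halfPlaneReps_iff hn hω hρ.1).1 hρ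
      rcases Set.pair_eq_pair_iff.1 (hpair.symm.trans hL) with ⟨h0, h1⟩ | ⟨h0, h1⟩
      · exact Or.inr (hρ.1.eq_of_endpoints hn hω hB (h0.trans hB0.symm) (h1.trans hBpen.symm))
      · exact Or.inl (hρ.1.eq_of_endpoints hn hω hA (h0.trans hA0.symm) (h1.trans hApen.symm))
    · rintro (rfl | rfl)
      · rw [mem_halfPlaneReps_iff hn hω hA, hA0, hApen, pair_comm]
        exact ⟨hne.symm, hL⟩
      · rw [mem_halfPlaneReps_iff hn hω hB, hB0, hBpen]
        exact ⟨hne, hL⟩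
  rw [hAB, ncard_pair]
  exact fun h => hne (hB0.symm.trans ((congrFun h 0).symm.trans hA0))

lemma ncard_halfPlaneReps_of_hasLowestBond (hn : 2 ≤ n) (hω : IsSAP n ω)
    (h : HasLowestBond n ω) : (halfPlaneReps n ω).ncard = 2 := by
  obtain ⟨p, q, -, hL, i, hbond⟩ := h
  have hi : cyc n ω i = ω ⟨i, Nat.lt_succ_of_lt i.isLt⟩ :=
    cyc_val (by omega) hω ⟨i, Nat.lt_succ_of_lt i.isLt⟩
  have hi' : cyc n ω (i + 1) = ω ⟨i + 1, Nat.succ_lt_succ i.isLt⟩ :=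
    cyc_val (by omega) hω ⟨i + 1, Nat.succ_lt_succ i.isLt⟩
  refine ncard_halfPlaneReps_of_lowestPoints hn hω i ?_
  rcases hbond with ⟨hp, hq⟩ | ⟨hq, hp⟩
  · rw [hi, hi', hp, hq, hL]
  · rw [hi, hi', hp, hq, hL, pair_comm]

end

/-- Let `n ≥ 2` and let `ω` be a SAP of length `2n` in `ℤ²`.  Among the `4n`
representatives `ρ ∈ {T^j ω, (T^j ω)^R : 0 ≤ j ≤ 2n−1}`, the number of `ρ` whose
translate `ρ − ρ_0` lies in `Γ⁺_{2n}` is either `0` or `2`; it equals `2` if and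
only if the set of vertices of `ω` with minimal second coordinate consists of
exactly two points and these two points are joined by an edge of `ω`. -/
theorem sap_halfplane_representatives (n : ℕ) (hn : 2 ≤ n)
    (ω : Fin (2 * n + 1) → ℤ × ℤ) (hω : IsSAP n ω) :
    (Set.ncard {ρ : Fin (2 * n + 1) → ℤ × ℤ |
          (∃ j < 2 * n, ρ = repSAP n j false ω ∨ ρ = repSAP n j true ω) ∧
          GammaPlus n (fun i => ρ i - ρ 0)} = 0 ∨
      Set.ncard {ρ : Fin (2 * n + 1) → ℤ × ℤ |
          (∃ j < 2 * n, ρ = repSAP n j false ω ∨ ρ = repSAP n j true ω) ∧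
          GammaPlus n (fun i => ρ i - ρ 0)} = 2) ∧
    (Set.ncard {ρ : Fin (2 * n + 1) → ℤ × ℤ |
          (∃ j < 2 * n, ρ = repSAP n j false ω ∨ ρ = repSAP n j true ω) ∧
          GammaPlus n (fun i => ρ i - ρ 0)} = 2 ↔
      ∃ p q : ℤ × ℤ, p ≠ q ∧
        {x : ℤ × ℤ | x ∈ Set.range ω ∧ ∀ i : Fin (2 * n + 1), x.2 ≤ (ω i).2} = {p, q} ∧
        ∃ i : Fin (2 * n),
          (ω ⟨i.val, Nat.lt_succ_of_lt i.isLt⟩ = p ∧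
              ω ⟨i.val + 1, Nat.succ_lt_succ i.isLt⟩ = q) ∨
          (ω ⟨i.val, Nat.lt_succ_of_lt i.isLt⟩ = q ∧
              ω ⟨i.val + 1, Nat.succ_lt_succ i.isLt⟩ = p)) := by
  rw [← lowestPoints_range]
  change ((halfPlaneReps n ω).ncard = 0 ∨ (halfPlaneReps n ω).ncard = 2) ∧
    ((halfPlaneReps n ω).ncard = 2 ↔ HasLowestBond n ω)
  have hbond : (halfPlaneReps n ω).Nonempty → HasLowestBond n ω :=
    fun ⟨_, hρ⟩ => hasLowestBond_of_mem_halfPlaneReps hn hω hρ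
  have htwo : HasLowestBond n ω → (halfPlaneReps n ω).ncard = 2 :=
    ncard_halfPlaneReps_of_hasLowestBond hn hω
  refine ⟨?_, fun h => hbond (nonempty_of_ncard_ne_zero (by omega)), htwo⟩
  rcases (halfPlaneReps n ω).eq_empty_or_nonempty with h | h
  · exact Or.inl (by rw [h, ncard_empty])
  · exact Or.inr (htwo (hbond h))
end

section
/- For integers 1 ≤ k < n, the concatenation map (χ, ω') ↦ χ ⊕ ω' := [χ_0, χ_1, …, χ_k, χ_k + ω'_1, …, χ_k + ω'_{n−k}] is a bijection from (the set of k-step irreducible bridges) × Υ_{n−k} onto {ω ∈ Υ_n : s(ω) = k}. In particular #{ω ∈ Υ_n : s(ω) = k} = λ_k · υ_{n−k}, and hence the uniform measure μ_n on Υ_n satisfies μ_n{s(ω) = k} = λ_k υ_{n−k}/υ_n. -/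
/-!
Cutting a walk at a renewal time `k` separates it into a piece that stays weakly to the left of
the hyperplane `π₁ = π₁ ω_k` and a piece that stays strictly to its right. Hence the walk is
self-avoiding with positive first coordinates iff both pieces are, and its renewal times before
`k` are exactly the renewal times of the first piece; so the first piece is an irreducible bridge
exactly when `k` is the least renewal time. Splitting at `k` inverts concatenation, and the counts
follow from the bijection.
-/

/-- An `n`-step self-avoiding walk in `ℤ^d`, given by its `n+1` vertices:
consecutive vertices are nearest neighbors, and all vertices are distinct. -/
def IsSAW (d n : ℕ) (ω : Fin (n + 1) → Fin d → ℤ) : Prop :=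
  (∀ i : Fin n, (∑ k : Fin d, |ω i.succ k - ω i.castSucc k|) = 1) ∧ Function.Injective ω

/-- The projection `π₁` onto the first coordinate. -/
def pi1 {d : ℕ} (x : Fin d → ℤ) : ℤ := if h : 0 < d then x ⟨0, h⟩ else 0

/-- `Υ_n`: the set of `n`-step self-avoiding walks in `ℤ^d` starting at `0` with
`π₁ ω_j > 0` for `1 ≤ j ≤ n`. -/
def Upsilon (d n : ℕ) : Set (Fin (n + 1) → Fin d → ℤ) :=
  {ω | IsSAW d n ω ∧ ω 0 = 0 ∧ ∀ j : Fin (n + 1), 1 ≤ j.val → 0 < pi1 (ω j)}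

/-- `υ_n`, the number of walks in `Υ_n`. -/
noncomputable def upsilonCount (d n : ℕ) : ℕ := Set.ncard (Upsilon d n)

/-- `j` is a renewal time of the `n`-step walk `ω`: `1 ≤ j ≤ n-1` and
`π₁ ω_k ≤ π₁ ω_j < π₁ ω_m` whenever `0 ≤ k ≤ j < m ≤ n`. -/
def HasRenewalAt {d n : ℕ} (ω : Fin (n + 1) → Fin d → ℤ) (j : ℕ) : Prop :=
  1 ≤ j ∧ ∃ hj : j < n, ∀ k m : Fin (n + 1), k.val ≤ j → j < m.val →
    pi1 (ω k) ≤ pi1 (ω ⟨j, Nat.lt_succ_of_lt hj⟩) ∧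
      pi1 (ω ⟨j, Nat.lt_succ_of_lt hj⟩) < pi1 (ω m)

/-- `s(ω) = k`: `k` is the least renewal time of `ω`. -/
def LeastRenewal {d n : ℕ} (ω : Fin (n + 1) → Fin d → ℤ) (k : ℕ) : Prop :=
  HasRenewalAt ω k ∧ ∀ j < k, ¬ HasRenewalAt ω j

/-- A bridge: a walk in `Υ_n` with `π₁ ω_j ≤ π₁ ω_n` for all `0 ≤ j ≤ n`. -/
def IsBridge (d n : ℕ) (ω : Fin (n + 1) → Fin d → ℤ) : Prop :=
  ω ∈ Upsilon d n ∧ ∀ j : Fin (n + 1), pi1 (ω j) ≤ pi1 (ω (Fin.last n))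

/-- An irreducible bridge: a bridge with no renewal time. -/
def IsIrrBridge (d n : ℕ) (ω : Fin (n + 1) → Fin d → ℤ) : Prop :=
  IsBridge d n ω ∧ ∀ j : ℕ, ¬ HasRenewalAt ω j

/-- `λ_k`, the number of `k`-step irreducible bridges. -/
noncomputable def lambdaCount (d k : ℕ) : ℕ :=
  Set.ncard {ω : Fin (k + 1) → Fin d → ℤ | IsIrrBridge d k ω}

/-- Concatenation `χ ⊕ ω'` of a `k`-step walk `χ` and an `(m)`-step walk `ω'`
starting at `0`: follow `χ`, then the translate of `ω'` by `χ_k`. -/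
def concatW {d k m : ℕ} (χ : Fin (k + 1) → Fin d → ℤ) (ω' : Fin (m + 1) → Fin d → ℤ) :
    Fin (k + m + 1) → Fin d → ℤ :=
  fun i =>
    if h : i.val ≤ k then χ ⟨i.val, by omega⟩
    else χ (Fin.last k) + ω' ⟨i.val - k, by have := i.isLt; omega⟩

section Concatenation

variable {d k m : ℕ}

lemma pi1_add (x y : Fin d → ℤ) : pi1 (x + y) = pi1 x + pi1 y := by
  unfold pi1; split_ifs <;> simp

def stepLength {n : ℕ} (ω : Fin (n + 1) → Fin d → ℤ) (i : Fin n) : ℤ :=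
  ∑ c, |ω i.succ c - ω i.castSucc c|

def HasUnitSteps {n : ℕ} (ω : Fin (n + 1) → Fin d → ℤ) : Prop :=
  ∀ i, stepLength ω i = 1

def leftPart (ω : Fin (k + m + 1) → Fin d → ℤ) : Fin (k + 1) → Fin d → ℤ :=
  fun i => ω ⟨i, by omega⟩

def rightPart (ω : Fin (k + m + 1) → Fin d → ℤ) : Fin (m + 1) → Fin d → ℤ :=
  fun j => ω ⟨k + j, by omega⟩ - ω ⟨k, by omega⟩

section

variable (χ : Fin (k + 1) → Fin d → ℤ) (ω' : Fin (m + 1) → Fin d → ℤ)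

lemma concatW_of_le {a : Fin (k + m + 1)} (h : a.val ≤ k) :
    concatW χ ω' a = χ ⟨a, by omega⟩ :=
  dif_pos h

lemma concatW_of_lt {a : Fin (k + m + 1)} (h : k < a.val) :
    concatW χ ω' a = χ (Fin.last k) + ω' ⟨a - k, by omega⟩ :=
  dif_neg (by omega)

lemma leftPart_concatW : leftPart (concatW χ ω') = χ :=
  funext fun i => concatW_of_le χ ω' (Nat.lt_succ_iff.mp i.isLt)

variable {ω'}

lemma concatW_add (h0 : ω' 0 = 0) (j : Fin (m + 1)) :
    concatW χ ω' ⟨k + j, by omega⟩ = χ (Fin.last k) + ω' j := by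
  rcases Nat.eq_zero_or_pos j with hj | hj
  · obtain rfl : j = 0 := Fin.ext hj
    rw [concatW_of_le χ ω' (by simp), h0, add_zero]
    rfl
  · rw [concatW_of_lt χ ω' (by dsimp; omega)]
    simp

lemma rightPart_concatW (h0 : ω' 0 = 0) : rightPart (concatW χ ω') = ω' := by
  funext j
  have := concatW_add χ h0 0
  simp only [rightPart, concatW_add χ h0, Fin.val_zero, add_zero] at this ⊢
  rw [this, h0, add_zero, add_sub_cancel_left]

end

lemma rightPart_zero (ω : Fin (k + m + 1) → Fin d → ℤ) : rightPart ω 0 = 0 :=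
  sub_self _

lemma concatW_leftPart_rightPart (ω : Fin (k + m + 1) → Fin d → ℤ) :
    concatW (leftPart ω) (rightPart ω) = ω := by
  funext a
  rcases le_or_gt a.val k with h | h
  · exact concatW_of_le _ _ h
  · rw [concatW_of_lt _ _ h]
    simp only [leftPart, rightPart, Fin.val_last, Nat.add_sub_cancel' h.le, add_sub_cancel]

lemma isSAW_iff {n : ℕ} (ω : Fin (n + 1) → Fin d → ℤ) :
    IsSAW d n ω ↔ HasUnitSteps ω ∧ Function.Injective ω :=
  Iff.rfl

lemma Function.Injective.leftPart {ω : Fin (k + m + 1) → Fin d → ℤ}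
    (h : Function.Injective ω) : Function.Injective (leftPart ω) :=
  fun _ _ e => Fin.ext (Fin.mk.inj (h e))

lemma Function.Injective.rightPart {ω : Fin (k + m + 1) → Fin d → ℤ}
    (h : Function.Injective ω) : Function.Injective (rightPart ω) :=
  fun _ _ e => Fin.ext (Nat.add_left_cancel (Fin.mk.inj (h (sub_left_injective e))))

section

variable {χ : Fin (k + 1) → Fin d → ℤ} {ω' : Fin (m + 1) → Fin d → ℤ}

lemma pi1_concatW_le (hbr : ∀ i, pi1 (χ i) ≤ pi1 (χ (Fin.last k)))
    {a : Fin (k + m + 1)} (ha : a.val ≤ k) : pi1 (concatW χ ω' a) ≤ pi1 (χ (Fin.last k)) := by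
  rw [concatW_of_le χ ω' ha]
  exact hbr _

lemma pi1_concatW_gt (hpos : ∀ j : Fin (m + 1), 1 ≤ j.val → 0 < pi1 (ω' j))
    {a : Fin (k + m + 1)} (ha : k < a.val) : pi1 (χ (Fin.last k)) < pi1 (concatW χ ω' a) := by
  rw [concatW_of_lt χ ω' ha, pi1_add]
  linarith [hpos ⟨a - k, by omega⟩ (by dsimp; omega)]

lemma hasRenewalAt_concatW_iff (hk : 1 ≤ k) (hm : 1 ≤ m) :
    HasRenewalAt (concatW χ ω') k ↔
      (∀ i, pi1 (χ i) ≤ pi1 (χ (Fin.last k))) ∧ ∀ j : Fin (m + 1), 1 ≤ j.val → 0 < pi1 (ω' j) := by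
  have hmid : ∀ h, concatW χ ω' ⟨k, h⟩ = χ (Fin.last k) := fun _ => concatW_of_le χ ω' le_rfl
  constructor
  · rintro ⟨-, _, hren⟩
    refine ⟨fun i => ?_, fun j hj => ?_⟩
    · have := (hren ⟨i, by omega⟩ (Fin.last _) (by simp; omega) (by simp; omega)).1
      rwa [concatW_of_le χ ω' (by dsimp; omega), hmid] at this
    · have := (hren 0 ⟨k + j, by omega⟩ (by simp) (by dsimp; omega)).2
      rw [concatW_of_lt χ ω' (a := ⟨k + j, by omega⟩) (by dsimp; omega), hmid, pi1_add] at this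
      simpa using this
  · rintro ⟨hbr, hpos⟩
    refine ⟨hk, by omega, fun a c ha hc => ?_⟩
    rw [hmid]
    exact ⟨pi1_concatW_le hbr ha, pi1_concatW_gt hpos hc⟩

lemma stepLength_concatW_left (i : Fin k) :
    stepLength (concatW χ ω') ⟨i, by omega⟩ = stepLength χ i := by
  unfold stepLength
  rw [concatW_of_le χ ω' (by simp), concatW_of_le χ ω' (by simp)]
  rfl

lemma stepLength_concatW_right (h0 : ω' 0 = 0) (j : Fin m) :
    stepLength (concatW χ ω') ⟨k + j, by omega⟩ = stepLength ω' j := by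
  unfold stepLength
  rw [show (⟨k + j, _⟩ : Fin (k + m)).succ = ⟨k + j.succ, by omega⟩ from rfl,
    show (⟨k + j, _⟩ : Fin (k + m)).castSucc = ⟨k + j.castSucc, by omega⟩ from rfl,
    concatW_add χ h0, concatW_add χ h0]
  simp only [Pi.add_apply, add_sub_add_left_eq_sub]

lemma hasUnitSteps_concatW_iff (h0 : ω' 0 = 0) :
    HasUnitSteps (concatW χ ω') ↔ HasUnitSteps χ ∧ HasUnitSteps ω' := by
  constructor
  · intro h
    exact ⟨fun i => stepLength_concatW_left i ▸ h _,
      fun j => stepLength_concatW_right h0 j ▸ h _⟩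
  · rintro ⟨hχ, hω'⟩ ⟨a, ha⟩
    rcases lt_or_ge a k with h | h
    · exact (stepLength_concatW_left ⟨a, h⟩).trans (hχ _)
    · obtain ⟨j, rfl⟩ := Nat.exists_eq_add_of_le h
      exact (stepLength_concatW_right h0 ⟨j, by omega⟩).trans (hω' _)

lemma injective_concatW_iff (h0 : ω' 0 = 0) (hbr : ∀ i, pi1 (χ i) ≤ pi1 (χ (Fin.last k)))
    (hpos : ∀ j : Fin (m + 1), 1 ≤ j.val → 0 < pi1 (ω' j)) :
    Function.Injective (concatW χ ω') ↔ Function.Injective χ ∧ Function.Injective ω' := by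
  constructor
  · intro h
    exact ⟨leftPart_concatW χ ω' ▸ h.leftPart, rightPart_concatW χ h0 ▸ h.rightPart⟩
  · rintro ⟨hχ, hω'⟩ a b hab
    have hsep : ∀ a b : Fin (k + m + 1), a.val ≤ k → k < b.val → concatW χ ω' a ≠ concatW χ ω' b :=
      fun a b ha hb e => (pi1_concatW_le hbr ha).not_gt (e ▸ pi1_concatW_gt hpos hb)
    rcases le_or_gt a.val k with ha | ha <;> rcases le_or_gt b.val k with hb | hb
    · rw [concatW_of_le χ ω' ha, concatW_of_le χ ω' hb] at hab
      exact Fin.ext (Fin.mk.inj (hχ hab))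
    · exact absurd hab (hsep a b ha hb)
    · exact absurd hab.symm (hsep b a hb ha)
    · rw [concatW_of_lt χ ω' ha, concatW_of_lt χ ω' hb] at hab
      have := Fin.mk.inj (hω' (add_left_cancel hab))
      exact Fin.ext (by omega)

lemma concatW_zero : concatW χ ω' 0 = χ 0 :=
  concatW_of_le χ ω' (Nat.zero_le k)

lemma pi1_concatW_pos_iff (hk : 1 ≤ k) (hpos : ∀ j : Fin (m + 1), 1 ≤ j.val → 0 < pi1 (ω' j)) :
    (∀ a : Fin (k + m + 1), 1 ≤ a.val → 0 < pi1 (concatW χ ω' a)) ↔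
      ∀ i : Fin (k + 1), 1 ≤ i.val → 0 < pi1 (χ i) := by
  constructor
  · intro h i hi
    have := h ⟨i, by omega⟩ hi
    rwa [concatW_of_le χ ω' (by dsimp; omega)] at this
  · intro h a ha
    rcases le_or_gt a.val k with hak | hak
    · rw [concatW_of_le χ ω' hak]
      exact h _ ha
    · exact (h (Fin.last k) hk).trans (pi1_concatW_gt hpos hak)

lemma concatW_mem_upsilon_iff (hk : 1 ≤ k) (h0 : ω' 0 = 0)
    (hbr : ∀ i, pi1 (χ i) ≤ pi1 (χ (Fin.last k)))
    (hpos : ∀ j : Fin (m + 1), 1 ≤ j.val → 0 < pi1 (ω' j)) :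
    concatW χ ω' ∈ Upsilon d (k + m) ↔ χ ∈ Upsilon d k ∧ IsSAW d m ω' := by
  simp only [Upsilon, Set.mem_ofPred_eq, isSAW_iff, hasUnitSteps_concatW_iff h0,
    injective_concatW_iff h0 hbr hpos, concatW_zero, pi1_concatW_pos_iff hk hpos]
  tauto

lemma hasRenewalAt_concatW_iff_of_lt (hpos : ∀ j : Fin (m + 1), 1 ≤ j.val → 0 < pi1 (ω' j))
    {j : ℕ} (hj : j < k) : HasRenewalAt (concatW χ ω') j ↔ HasRenewalAt χ j := by
  have hval : ∀ a : Fin (k + m + 1), (ha : a.val ≤ k) → concatW χ ω' a = χ ⟨a, by omega⟩ :=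
    fun a ha => concatW_of_le χ ω' ha
  constructor
  · rintro ⟨hj1, _, hren⟩
    refine ⟨hj1, hj, fun a c ha hc => ?_⟩
    have := hren ⟨a, by omega⟩ ⟨c, by omega⟩ ha hc
    rwa [hval _ (by dsimp; omega), hval _ (by dsimp; omega), hval _ (by dsimp; omega)] at this
  · rintro ⟨hj1, _, hren⟩
    refine ⟨hj1, by omega, fun a c ha hc => ?_⟩
    rw [hval a (by omega), hval _ (by dsimp; omega)]
    refine ⟨(hren _ (Fin.last k) ha (by simp; omega)).1, ?_⟩
    -- past `k` the walk lies strictly to the right of `χ_k`, hence of `χ_j`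
    rcases le_or_gt c.val k with hck | hck
    · rw [hval c hck]
      exact (hren 0 _ (Nat.zero_le j) hc).2
    · exact (hren 0 (Fin.last k) (Nat.zero_le j) hj).2.trans (pi1_concatW_gt hpos hck)

lemma forall_lt_not_hasRenewalAt_concatW_iff
    (hpos : ∀ j : Fin (m + 1), 1 ≤ j.val → 0 < pi1 (ω' j)) :
    (∀ j < k, ¬ HasRenewalAt (concatW χ ω') j) ↔ ∀ j, ¬ HasRenewalAt χ j :=
  ⟨fun h j hχ => h j hχ.2.fst ((hasRenewalAt_concatW_iff_of_lt hpos hχ.2.fst).mpr hχ),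
    fun h j hj => (hasRenewalAt_concatW_iff_of_lt hpos hj).not.mpr (h j)⟩

theorem concatW_mem_upsilon_leastRenewal_iff (hk : 1 ≤ k) (hm : 1 ≤ m) (h0 : ω' 0 = 0) :
    concatW χ ω' ∈ Upsilon d (k + m) ∧ LeastRenewal (concatW χ ω') k ↔
      IsIrrBridge d k χ ∧ ω' ∈ Upsilon d m := by
  rw [LeastRenewal, hasRenewalAt_concatW_iff hk hm]
  constructor
  · rintro ⟨hΥ, ⟨hbr, hpos⟩, hmin⟩
    obtain ⟨hχ, hsaw⟩ := (concatW_mem_upsilon_iff hk h0 hbr hpos).mp hΥ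
    exact ⟨⟨⟨hχ, hbr⟩, (forall_lt_not_hasRenewalAt_concatW_iff hpos).mp hmin⟩, hsaw, h0, hpos⟩
  · rintro ⟨⟨⟨hχ, hbr⟩, hirr⟩, hsaw, -, hpos⟩
    exact ⟨(concatW_mem_upsilon_iff hk h0 hbr hpos).mpr ⟨hχ, hsaw⟩, ⟨hbr, hpos⟩,
      (forall_lt_not_hasRenewalAt_concatW_iff hpos).mpr hirr⟩

end

theorem bijOn_concatW_leastRenewal (hk : 1 ≤ k) (hm : 1 ≤ m) :
    Set.BijOn (fun p : (Fin (k + 1) → Fin d → ℤ) × (Fin (m + 1) → Fin d → ℤ) => concatW p.1 p.2)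
      ({χ | IsIrrBridge d k χ} ×ˢ Upsilon d m) {ω | ω ∈ Upsilon d (k + m) ∧ LeastRenewal ω k} := by
  refine Set.InvOn.bijOn (f' := fun ω => (leftPart ω, rightPart ω)) ⟨?_, ?_⟩ ?_ ?_
  · rintro ⟨χ, ω'⟩ ⟨-, -, h0, -⟩
    simp only [leftPart_concatW, rightPart_concatW χ h0]
  · intro ω _
    exact concatW_leftPart_rightPart ω
  · rintro ⟨χ, ω'⟩ hp
    exact (concatW_mem_upsilon_leastRenewal_iff hk hm hp.2.2.1).mpr hp
  · intro ω hω
    rw [← concatW_leftPart_rightPart ω] at hω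
    exact (concatW_mem_upsilon_leastRenewal_iff hk hm (rightPart_zero ω)).mp hω

end Concatenation

theorem concat_bijection_leastRenewal_general (d : ℕ)
    (k m : ℕ) (hk : 1 ≤ k) (hm : 1 ≤ m) :
    Set.BijOn
      (fun p : (Fin (k + 1) → Fin d → ℤ) × (Fin (m + 1) → Fin d → ℤ) =>
        concatW p.1 p.2)
      {p | IsIrrBridge d k p.1 ∧ p.2 ∈ Upsilon d m}
      {ω : Fin (k + m + 1) → Fin d → ℤ | ω ∈ Upsilon d (k + m) ∧ LeastRenewal ω k} ∧
    Set.ncard {ω : Fin (k + m + 1) → Fin d → ℤ | ω ∈ Upsilon d (k + m) ∧ LeastRenewal ω k}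
      = lambdaCount d k * upsilonCount d m ∧
    (Set.ncard {ω : Fin (k + m + 1) → Fin d → ℤ |
          ω ∈ Upsilon d (k + m) ∧ LeastRenewal ω k} : ℝ) / (upsilonCount d (k + m) : ℝ)
      = (lambdaCount d k : ℝ) * (upsilonCount d m : ℝ) / (upsilonCount d (k + m) : ℝ) := by
  have hbij := bijOn_concatW_leastRenewal (d := d) hk hm
  have hcard := hbij.ncard_eq.symm.trans Set.ncard_prod
  refine ⟨hbij, hcard, ?_⟩
  rw [hcard, Nat.cast_mul]
  rfl

/-- For `1 ≤ k < n` (here `n = k + m` with `m ≥ 1`), concatenation is a bijection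
from (the set of `k`-step irreducible bridges) × `Υ_{n-k}` onto
`{ω ∈ Υ_n : s(ω) = k}`.  In particular `#{ω ∈ Υ_n : s(ω) = k} = λ_k · υ_{n-k}`,
and the uniform measure `μ_n` on `Υ_n` gives
`μ_n{s(ω) = k} = λ_k υ_{n-k} / υ_n`. -/
theorem concat_bijection_leastRenewal (d : ℕ) (hd : 2 ≤ d)
    (k m : ℕ) (hk : 1 ≤ k) (hm : 1 ≤ m) :
    Set.BijOn
      (fun p : (Fin (k + 1) → Fin d → ℤ) × (Fin (m + 1) → Fin d → ℤ) =>
        concatW p.1 p.2)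
      {p | IsIrrBridge d k p.1 ∧ p.2 ∈ Upsilon d m}
      {ω : Fin (k + m + 1) → Fin d → ℤ | ω ∈ Upsilon d (k + m) ∧ LeastRenewal ω k} ∧
    Set.ncard {ω : Fin (k + m + 1) → Fin d → ℤ | ω ∈ Upsilon d (k + m) ∧ LeastRenewal ω k}
      = lambdaCount d k * upsilonCount d m ∧
    (Set.ncard {ω : Fin (k + m + 1) → Fin d → ℤ |
          ω ∈ Upsilon d (k + m) ∧ LeastRenewal ω k} : ℝ) / (upsilonCount d (k + m) : ℝ)
      = (lambdaCount d k : ℝ) * (upsilonCount d m : ℝ) / (upsilonCount d (k + m) : ℝ) :=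
  concat_bijection_leastRenewal_general d k m hk hm
end

section
/- Let β > 1 be a real number and suppose that Σ_{j≥1} λ_j β^{−j} = 1 and that lim_{n→∞} υ_{n+2}/υ_n = β². Then lim_{n→∞} υ_{n+1}/υ_n = β. -/
namespace SAWaux

lemma pi1_eq {d : ℕ} (hd : 0 < d) (x : Fin d → ℤ) : pi1 x = x ⟨0, hd⟩ := dif_pos hd

lemma step_bound {d n : ℕ} {ω : Fin (n + 1) → Fin d → ℤ} (hs : IsSAW d n ω) (i : Fin n)
    (c : Fin d) : |ω i.succ c - ω i.castSucc c| ≤ 1 := by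
  rw [← hs.1 i]
  exact Finset.single_le_sum (f := fun k => |ω i.succ k - ω i.castSucc k|)
    (fun k _ => abs_nonneg _) (Finset.mem_univ c)

lemma upsilon_finite (d n : ℕ) : (Upsilon d n).Finite := by
  have hsub : Upsilon d n ⊆ Set.pi Set.univ
      (fun _ : Fin (n+1) => Set.pi Set.univ fun _ : Fin d => Set.Icc (-(n:ℤ)) n) := by
    intro ω hω
    have key : ∀ j : ℕ, ∀ hj : j < n + 1, ∀ c, |ω ⟨j, hj⟩ c| ≤ (j : ℤ) := by
      intro j
      induction j with
      | zero =>
        intro hj c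
        have h0 : (⟨0, hj⟩ : Fin (n+1)) = 0 := rfl
        rw [h0, hω.2.1]
        simp
      | succ j ih =>
        intro hj c
        have hj' : j < n + 1 := by omega
        have hjn : j < n := by omega
        have hstep := step_bound hω.1 ⟨j, hjn⟩ c
        have hsucc : (Fin.succ ⟨j, hjn⟩ : Fin (n+1)) = ⟨j+1, hj⟩ := rfl
        have hcast : (Fin.castSucc ⟨j, hjn⟩ : Fin (n+1)) = ⟨j, hj'⟩ := rfl
        rw [hsucc, hcast] at hstep
        have := ih hj' c
        have := abs_sub_abs_le_abs_sub (ω ⟨j+1, hj⟩ c) (ω ⟨j, hj'⟩ c)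
        push_cast
        omega
    intro i _
    intro c _
    have hb := key i.val i.isLt c
    rw [Fin.eta] at hb
    have hin : (i : ℤ) ≤ (n : ℤ) := by exact_mod_cast Nat.le_of_lt_succ i.isLt
    have := abs_le.mp (le_trans hb hin)
    exact ⟨this.1, this.2⟩
  exact Set.Finite.subset (Set.Finite.pi fun _ => Set.Finite.pi fun _ => Set.finite_Icc _ _) hsub

lemma irrBridge_subset (d k : ℕ) :
    {ω : Fin (k + 1) → Fin d → ℤ | IsIrrBridge d k ω} ⊆ Upsilon d k :=
  fun _ h => h.1.1

lemma irrBridge_finite (d k : ℕ) :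
    {ω : Fin (k + 1) → Fin d → ℤ | IsIrrBridge d k ω}.Finite :=
  (upsilon_finite d k).subset (irrBridge_subset d k)

/-- the straight walk -/
def straight (d n : ℕ) : Fin (n + 1) → Fin d → ℤ := fun j c => if c.val = 0 then (j : ℤ) else 0

lemma straight_mem {d : ℕ} (hd : 0 < d) (n : ℕ) : straight d n ∈ Upsilon d n := by
  refine ⟨⟨?_, ?_⟩, ?_, ?_⟩
  · intro i
    have : ∀ c : Fin d, |straight d n i.succ c - straight d n i.castSucc c|
        = if c = ⟨0, hd⟩ then 1 else 0 := by
      intro c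
      simp only [straight, Fin.val_succ, Fin.coe_castSucc]
      rcases eq_or_ne c ⟨0, hd⟩ with h | h
      · subst h; simp
      · have : ¬ c.val = 0 := by
          intro h0; exact h (Fin.ext h0)
        simp [this, h]
    rw [Finset.sum_congr rfl fun c _ => this c]
    simp
  · intro i j hij
    have := congrFun hij ⟨0, hd⟩
    simp only [straight] at this
    exact Fin.ext (by exact_mod_cast this)
  · funext c; simp [straight]
  · intro j hj
    rw [pi1_eq hd]
    simp only [straight]
    have hj' : (0 : Fin (n+1)) < j := Fin.pos_iff_ne_zero.mpr fun h => by simp [h] at hj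
    simpa using hj'

lemma upsilonCount_pos {d : ℕ} (hd : 0 < d) (n : ℕ) : 0 < upsilonCount d n :=
  (Set.ncard_pos (upsilon_finite d n)).mpr ⟨_, straight_mem hd n⟩

end SAWaux

namespace SAWaux

lemma straight_isIrrBridge {d : ℕ} (hd : 0 < d) : IsIrrBridge d 1 (straight d 1) := by
  refine ⟨⟨straight_mem hd 1, ?_⟩, ?_⟩
  · intro j
    rw [pi1_eq hd, pi1_eq hd]
    simp only [straight, if_pos rfl]
    have : (j : ℤ) ≤ ((Fin.last 1 : Fin 2) : ℤ) := by
      have := Fin.le_last j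
      exact_mod_cast this
    exact this
  · intro j hj
    obtain ⟨h1, hlt, _⟩ := hj
    omega

lemma one_le_lambdaCount_one {d : ℕ} (hd : 0 < d) : 1 ≤ lambdaCount d 1 := by
  have : 0 < lambdaCount d 1 :=
    (Set.ncard_pos (irrBridge_finite d 1)).mpr ⟨_, straight_isIrrBridge hd⟩
  omega

/-- concatenation of a `k`-step walk with an `m`-step walk (translated) -/
def cat {d k m : ℕ} (b : Fin (k+1) → Fin d → ℤ) (t : Fin (m+1) → Fin d → ℤ) :
    Fin (k+m+1) → Fin d → ℤ :=
  fun j c => if h : j.val ≤ k then b ⟨j.val, by omega⟩ c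
    else t ⟨j.val - k, by have := j.isLt; omega⟩ c + b (Fin.last k) c

lemma cat_apply_le {d k m : ℕ} (b : Fin (k+1) → Fin d → ℤ) (t : Fin (m+1) → Fin d → ℤ)
    {j : Fin (k+m+1)} (h : j.val ≤ k) (c : Fin d) :
    cat b t j c = b ⟨j.val, by omega⟩ c := dif_pos h

lemma cat_apply_gt {d k m : ℕ} (b : Fin (k+1) → Fin d → ℤ) (t : Fin (m+1) → Fin d → ℤ)
    {j : Fin (k+m+1)} (h : ¬ j.val ≤ k) (c : Fin d) :
    cat b t j c = t ⟨j.val - k, by have := j.isLt; omega⟩ c + b (Fin.last k) c := dif_neg h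

lemma pi1_cat_le {d k m : ℕ} (hd : 0 < d) (b : Fin (k+1) → Fin d → ℤ)
    (t : Fin (m+1) → Fin d → ℤ) {j : Fin (k+m+1)} (h : j.val ≤ k) :
    pi1 (cat b t j) = pi1 (b ⟨j.val, by omega⟩) := by
  rw [pi1_eq hd, pi1_eq hd, cat_apply_le b t h]

lemma pi1_cat_gt {d k m : ℕ} (hd : 0 < d) (b : Fin (k+1) → Fin d → ℤ)
    (t : Fin (m+1) → Fin d → ℤ) {j : Fin (k+m+1)} (h : ¬ j.val ≤ k) :
    pi1 (cat b t j) = pi1 (t ⟨j.val - k, by have := j.isLt; omega⟩) + pi1 (b (Fin.last k)) := by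
  rw [pi1_eq hd, pi1_eq hd, pi1_eq hd, cat_apply_gt b t h]

end SAWaux


namespace SAWaux

open scoped Classical in
/-- the least renewal time, or `n` if there is none -/
noncomputable def tag {d n : ℕ} (ω : Fin (n + 1) → Fin d → ℤ) : ℕ :=
  if h : ∃ j, HasRenewalAt ω j then Nat.find h else n

lemma pi1_zero {d : ℕ} : pi1 (0 : Fin d → ℤ) = 0 := by
  unfold pi1; split <;> simp

section cat

set_option linter.unusedSectionVars false

variable {d k m : ℕ} {b : Fin (k+1) → Fin d → ℤ} {t : Fin (m+1) → Fin d → ℤ}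
variable (hd : 0 < d) (hb : IsIrrBridge d k b) (ht : t ∈ Upsilon d m)

include hd hb ht

lemma pi1_last_nonneg : 0 ≤ pi1 (b (Fin.last k)) := by
  have h := hb.1.2 0
  rwa [hb.1.1.2.1, pi1_zero] at h

lemma cat_pi1_le {j : Fin (k+m+1)} (h : j.val ≤ k) :
    pi1 (cat b t j) ≤ pi1 (b (Fin.last k)) := by
  rw [pi1_cat_le hd b t h]
  exact hb.1.2 _

lemma cat_pi1_gt {j : Fin (k+m+1)} (h : k < j.val) :
    pi1 (b (Fin.last k)) < pi1 (cat b t j) := by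
  rw [pi1_cat_gt hd b t (by omega)]
  have hpos : 0 < pi1 (t ⟨j.val - k, by have := j.isLt; omega⟩) :=
    ht.2.2 _ (by simp only []; omega)
  omega

lemma cat_pi1_at_k (hkk : k < k + m + 1) :
    pi1 (cat b t ⟨k, hkk⟩) = pi1 (b (Fin.last k)) := by
  rw [pi1_cat_le hd b t (le_refl k)]
  rfl

lemma cat_mem_upsilon : cat b t ∈ Upsilon d (k + m) := by
  have hbS := hb.1.1.1.1
  have hbI := hb.1.1.1.2
  have hb0 := hb.1.1.2.1
  have hbP := hb.1.1.2.2
  have htS := ht.1.1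
  have htI := ht.1.2
  have ht0 := ht.2.1
  have htP := ht.2.2
  refine ⟨⟨?_, ?_⟩, ?_, ?_⟩
  · -- steps
    intro i
    rcases lt_trichotomy i.val k with hik | hik | hik
    · have h1 : (i.succ : Fin (k+m+1)).val ≤ k := by
        simp only [Fin.val_succ]; omega
      have h2 : (i.castSucc : Fin (k+m+1)).val ≤ k := by
        simp only [Fin.coe_castSucc]; omega
      have hc : ∀ c, cat b t i.succ c - cat b t i.castSucc c
          = b (Fin.succ ⟨i.val, hik⟩) c - b (Fin.castSucc ⟨i.val, hik⟩) c := by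
        intro c
        rw [cat_apply_le b t h1, cat_apply_le b t h2]
        rfl
      calc ∑ c : Fin d, |cat b t i.succ c - cat b t i.castSucc c|
          = ∑ c : Fin d, |b (Fin.succ ⟨i.val, hik⟩) c - b (Fin.castSucc ⟨i.val, hik⟩) c| :=
            Finset.sum_congr rfl fun c _ => by rw [hc c]
        _ = 1 := hbS ⟨i.val, hik⟩
    · -- i.val = k, the joining step; m ≥ 1
      have hm : 0 < m := by have := i.isLt; omega
      have h2 : (i.castSucc : Fin (k+m+1)).val ≤ k := by
        simp only [Fin.coe_castSucc]; omega
      have h1 : ¬ (i.succ : Fin (k+m+1)).val ≤ k := by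
        simp only [Fin.val_succ]; omega
      have hc : ∀ c, cat b t i.succ c - cat b t i.castSucc c
          = t (Fin.succ ⟨0, hm⟩) c - t (Fin.castSucc ⟨0, hm⟩) c := by
        intro c
        rw [cat_apply_le b t h2, cat_apply_gt b t h1]
        have e1 : (⟨(i.succ : Fin (k+m+1)).val - k, by have := i.isLt; simp only [Fin.val_succ]; omega⟩ :
            Fin (m+1)) = Fin.succ ⟨0, hm⟩ := by
          apply Fin.ext; simp only [Fin.val_succ]; omega
        have e2 : (⟨(i.castSucc : Fin (k+m+1)).val, by simp only [Fin.coe_castSucc]; omega⟩ : Fin (k+1)) = Fin.last k := by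
          apply Fin.ext; simp only [Fin.coe_castSucc, Fin.val_last]; omega
        have e3 : t (Fin.castSucc ⟨0, hm⟩) c = 0 := by
          have h0 : (Fin.castSucc ⟨0, hm⟩ : Fin (m+1)) = 0 := by
            apply Fin.ext; simp
          rw [h0, ht0]; rfl
        rw [e1, e2, e3]
        ring
      calc ∑ c : Fin d, |cat b t i.succ c - cat b t i.castSucc c|
          = ∑ c : Fin d, |t (Fin.succ ⟨0, hm⟩) c - t (Fin.castSucc ⟨0, hm⟩) c| :=
            Finset.sum_congr rfl fun c _ => by rw [hc c]
        _ = 1 := htS ⟨0, hm⟩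
    · -- i.val > k
      have hi' : i.val - k < m := by have := i.isLt; omega
      have h1 : ¬ (i.succ : Fin (k+m+1)).val ≤ k := by
        simp only [Fin.val_succ]; omega
      have h2 : ¬ (i.castSucc : Fin (k+m+1)).val ≤ k := by
        simp only [Fin.coe_castSucc]; omega
      have hc : ∀ c, cat b t i.succ c - cat b t i.castSucc c
          = t (Fin.succ ⟨i.val - k, hi'⟩) c - t (Fin.castSucc ⟨i.val - k, hi'⟩) c := by
        intro c
        rw [cat_apply_gt b t h1, cat_apply_gt b t h2]
        have e1 : (⟨(i.succ : Fin (k+m+1)).val - k, by have := i.isLt; simp only [Fin.val_succ]; omega⟩ :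
            Fin (m+1)) = Fin.succ ⟨i.val - k, hi'⟩ := by
          apply Fin.ext; simp only [Fin.val_succ]; omega
        have e2 : (⟨(i.castSucc : Fin (k+m+1)).val - k, by have := i.isLt; simp only [Fin.coe_castSucc]; omega⟩ :
            Fin (m+1)) = Fin.castSucc ⟨i.val - k, hi'⟩ := by
          apply Fin.ext; simp only [Fin.coe_castSucc]; try omega
        rw [e1, e2]
        ring
      calc ∑ c : Fin d, |cat b t i.succ c - cat b t i.castSucc c|
          = ∑ c : Fin d, |t (Fin.succ ⟨i.val - k, hi'⟩) c - t (Fin.castSucc ⟨i.val - k, hi'⟩) c| :=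
            Finset.sum_congr rfl fun c _ => by rw [hc c]
        _ = 1 := htS ⟨i.val - k, hi'⟩
  · -- injective
    intro j j' hjj
    by_cases hj : j.val ≤ k <;> by_cases hj' : j'.val ≤ k
    · have hB : b ⟨j.val, by omega⟩ = b ⟨j'.val, by omega⟩ := by
        funext c
        rw [← cat_apply_le b t hj, ← cat_apply_le b t hj', hjj]
      have := congrArg Fin.val (hbI hB)
      exact Fin.ext this
    · exfalso
      have h1 := cat_pi1_le hd hb ht hj
      have h2 := cat_pi1_gt hd hb ht (by omega : k < j'.val)
      rw [congrArg pi1 hjj] at h1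
      omega
    · exfalso
      have h1 := cat_pi1_le hd hb ht hj'
      have h2 := cat_pi1_gt hd hb ht (by omega : k < j.val)
      rw [← congrArg pi1 hjj] at h1
      omega
    · have hT : t ⟨j.val - k, by have := j.isLt; omega⟩ = t ⟨j'.val - k, by have := j'.isLt; omega⟩ := by
        funext c
        have e1 := cat_apply_gt b t hj c
        have e2 := cat_apply_gt b t hj' c
        rw [hjj] at e1
        rw [e2] at e1
        omega
      have := congrArg Fin.val (htI hT)
      simp only at this
      apply Fin.ext
      omega
  · -- starts at 0
    funext c
    have h0 : ((0 : Fin (k+m+1))).val ≤ k := by simp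
    rw [cat_apply_le b t h0]
    have e : (⟨(0 : Fin (k+m+1)).val, by omega⟩ : Fin (k+1)) = 0 := by
      apply Fin.ext; simp
    rw [e, hb0]
    try rfl
  · -- positivity
    intro j hj
    by_cases h : j.val ≤ k
    · rw [pi1_cat_le hd b t h]
      exact hbP _ (by simpa using hj)
    · have hgt := cat_pi1_gt hd hb ht (by omega : k < j.val)
      have hnn := pi1_last_nonneg hd hb ht
      omega

lemma cat_renewal (hk : 1 ≤ k) (hm : 1 ≤ m) : HasRenewalAt (cat b t) k := by
  refine ⟨hk, ⟨by omega, fun p q hp hq => ?_⟩⟩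
  rw [cat_pi1_at_k hd hb ht]
  exact ⟨cat_pi1_le hd hb ht hp, cat_pi1_gt hd hb ht hq⟩

lemma cat_no_renewal_lt {j : ℕ} (hjk : j < k) : ¬ HasRenewalAt (cat b t) j := by
  rintro ⟨h1, hlt, hren⟩
  apply hb.2 j
  refine ⟨h1, ⟨hjk, fun p q hp hq => ?_⟩⟩
  have hpf : p.val < k+m+1 := by have := p.isLt; omega
  have hqf : q.val < k+m+1 := by have := q.isLt; omega
  have H := hren ⟨p.val, hpf⟩ ⟨q.val, hqf⟩ hp hq
  obtain ⟨H1, H2⟩ := H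
  have ep : pi1 (cat b t ⟨p.val, hpf⟩) = pi1 (b p) := by
    rw [pi1_cat_le hd b t (show p.val ≤ k by have := p.isLt; omega)]
  have eq' : pi1 (cat b t ⟨q.val, hqf⟩) = pi1 (b q) := by
    rw [pi1_cat_le hd b t (show q.val ≤ k by have := q.isLt; omega)]
  have ej : pi1 (cat b t ⟨j, Nat.lt_succ_of_lt hlt⟩) = pi1 (b ⟨j, Nat.lt_succ_of_lt hjk⟩) := by
    rw [pi1_cat_le hd b t (show j ≤ k by omega)]
  exact ⟨by omega, by omega⟩

end cat

end SAWaux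

namespace SAWaux

section cat2

variable {d k m : ℕ} {b : Fin (k+1) → Fin d → ℤ} {t : Fin (m+1) → Fin d → ℤ}

lemma tag_cat (hd : 0 < d) (hb : IsIrrBridge d k b) (ht : t ∈ Upsilon d m) (hk : 1 ≤ k) :
    tag (cat b t) = k := by
  by_cases hm : 1 ≤ m
  · classical
    have hex : ∃ j, HasRenewalAt (cat b t) j := ⟨k, cat_renewal hd hb ht hk hm⟩
    unfold tag
    rw [dif_pos hex]
    rw [Nat.find_eq_iff]
    exact ⟨cat_renewal hd hb ht hk hm, fun j hj => cat_no_renewal_lt hd hb ht hj⟩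
  · have hnex : ¬ ∃ j, HasRenewalAt (cat b t) j := by
      rintro ⟨j, hj⟩
      have hjlt : j < k + m := hj.2.1
      exact cat_no_renewal_lt hd hb ht (by omega) hj
    unfold tag
    rw [dif_neg hnex]
    omega

lemma cat_injOn (hd : 0 < d) :
    Set.InjOn (fun p : (Fin (k+1) → Fin d → ℤ) × (Fin (m+1) → Fin d → ℤ) => cat p.1 p.2)
      ({ω | IsIrrBridge d k ω} ×ˢ Upsilon d m) := by
  rintro ⟨b, t⟩ hp ⟨b', t'⟩ hq hpq
  simp only at hpq
  have hbb : b = b' := by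
    funext j c
    have hle : ((⟨j.val, by have := j.isLt; omega⟩ : Fin (k+m+1))).val ≤ k := by
      show j.val ≤ k
      have := j.isLt; omega
    have e := congrFun (congrFun hpq (⟨j.val, by have := j.isLt; omega⟩ : Fin (k+m+1))) c
    rw [cat_apply_le b t hle, cat_apply_le b' t' hle] at e
    exact e
  have htt : t = t' := by
    funext j c
    by_cases hj0 : j.val = 0
    · have hj : j = 0 := Fin.ext (by simpa using hj0)
      subst hj
      have ht0 : t 0 = 0 := hp.2.2.1
      have ht0' : t' 0 = 0 := hq.2.2.1
      rw [ht0, ht0']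
    · have pf : k + j.val < k + m + 1 := by have := j.isLt; omega
      have hgt : ¬ ((⟨k + j.val, pf⟩ : Fin (k+m+1))).val ≤ k := by
        show ¬ k + j.val ≤ k; omega
      have e := congrFun (congrFun hpq (⟨k + j.val, pf⟩ : Fin (k+m+1))) c
      rw [cat_apply_gt b t hgt, cat_apply_gt b' t' hgt, hbb] at e
      have e2 := add_right_cancel e
      have ej : (⟨(⟨k + j.val, pf⟩ : Fin (k+m+1)).val - k,
          by have := (⟨k + j.val, pf⟩ : Fin (k+m+1)).isLt; omega⟩ : Fin (m+1)) = j := by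
        apply Fin.ext
        show k + j.val - k = j.val
        omega
      rw [ej] at e2
      exact e2
  rw [Prod.ext_iff]
  exact ⟨hbb, htt⟩

lemma ncard_prod {α β : Type*} (s : Set α) (u : Set β) :
    (s ×ˢ u).ncard = s.ncard * u.ncard := by
  have h1 : (s ×ˢ u).ncard = Nat.card (s ×ˢ u : Set (α × β)) := rfl
  have h2 : s.ncard = Nat.card s := rfl
  have h3 : u.ncard = Nat.card u := rfl
  rw [h1, h2, h3, ← Nat.card_prod]
  exact Nat.card_congr (Equiv.Set.prod s u)

lemma count_ge (hd : 0 < d) (hk : 1 ≤ k) :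
    lambdaCount d k * upsilonCount d m ≤
      Set.ncard {ω ∈ Upsilon d (k+m) | tag ω = k} := by
  classical
  set B : Set (Fin (k+1) → Fin d → ℤ) := {ω | IsIrrBridge d k ω} with hB
  set U := Upsilon d m with hU
  set F : (Fin (k+1) → Fin d → ℤ) × (Fin (m+1) → Fin d → ℤ) → (Fin (k+m+1) → Fin d → ℤ) :=
    fun p => cat p.1 p.2 with hFdef
  have himg : F '' (B ×ˢ U) ⊆ {ω ∈ Upsilon d (k+m) | tag ω = k} := by
    rintro ω ⟨⟨b, t⟩, hbt, rfl⟩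
    exact ⟨cat_mem_upsilon hd hbt.1 hbt.2, tag_cat hd hbt.1 hbt.2 hk⟩
  have hfin : {ω ∈ Upsilon d (k+m) | tag ω = k}.Finite :=
    (upsilon_finite d (k+m)).subset (Set.sep_subset _ _)
  calc lambdaCount d k * upsilonCount d m = (B ×ˢ U).ncard := (ncard_prod B U).symm
    _ = (F '' (B ×ˢ U)).ncard := (Set.ncard_image_of_injOn (cat_injOn hd)).symm
    _ ≤ _ := Set.ncard_le_ncard himg hfin

end cat2

lemma count_ge' {d : ℕ} (hd : 0 < d) (n k : ℕ) (hk1 : 1 ≤ k) (hkn : k ≤ n) :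
    lambdaCount d k * upsilonCount d (n - k) ≤
      Set.ncard {ω ∈ Upsilon d n | tag ω = k} := by
  obtain ⟨m, rfl⟩ : ∃ m, n = k + m := ⟨n - k, by omega⟩
  have hm : k + m - k = m := by omega
  rw [hm]
  exact count_ge hd hk1

lemma key {d : ℕ} (hd : 0 < d) (n : ℕ) :
    ∑ k ∈ Finset.Icc 1 n, lambdaCount d k * upsilonCount d (n - k) ≤ upsilonCount d n := by
  classical
  rcases Nat.eq_zero_or_pos n with rfl | hn
  · simp
  have hfin := upsilon_finite d n
  have hcard : upsilonCount d n = hfin.toFinset.card := by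
    rw [upsilonCount, Set.ncard_eq_toFinset_card _ hfin]
  have htag : ∀ ω ∈ hfin.toFinset, tag ω ∈ Finset.Icc 1 n := by
    intro ω _
    unfold tag
    split
    · next h =>
      obtain ⟨h1, hlt, _⟩ := Nat.find_spec h
      simp only [Finset.mem_Icc]
      omega
    · simp only [Finset.mem_Icc]
      omega
  rw [hcard, Finset.card_eq_sum_card_fiberwise htag]
  apply Finset.sum_le_sum
  intro k hk
  obtain ⟨hk1, hkn⟩ := Finset.mem_Icc.mp hk
  have h1 := count_ge' hd n k hk1 hkn
  have heq : {ω ∈ Upsilon d n | tag ω = k} = ↑(hfin.toFinset.filter fun ω => tag ω = k) := by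
    ext ω
    simp only [Set.mem_sep_iff, Finset.coe_filter, Set.mem_setOf_eq, Set.Finite.mem_toFinset]
  rw [heq, Set.ncard_coe_finset] at h1
  exact h1

end SAWaux

namespace SAWaux

open Filter

noncomputable def u (d n : ℕ) : ℝ := (upsilonCount d n : ℝ)

noncomputable def rr (d n : ℕ) : ℝ := u d (n+1) / u d n

section analysis

variable {d : ℕ} (hd : 0 < d)

include hd

lemma u_pos (n : ℕ) : 0 < u d n := by
  have h := upsilonCount_pos hd n
  rw [u]
  exact_mod_cast h

lemma upsilon_mono (n : ℕ) : upsilonCount d n ≤ upsilonCount d (n+1) := by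
  have hkey := key hd (n+1)
  have h1 : (1 : ℕ) ∈ Finset.Icc 1 (n+1) := by simp
  have hsingle : lambdaCount d 1 * upsilonCount d (n+1-1) ≤
      ∑ k ∈ Finset.Icc 1 (n+1), lambdaCount d k * upsilonCount d (n+1-k) :=
    Finset.single_le_sum (f := fun k => lambdaCount d k * upsilonCount d (n+1-k))
      (fun k _ => Nat.zero_le _) h1
  have hlam := one_le_lambdaCount_one hd
  calc upsilonCount d n = 1 * upsilonCount d (n+1-1) := by simp
    _ ≤ lambdaCount d 1 * upsilonCount d (n+1-1) := Nat.mul_le_mul_right _ hlam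
    _ ≤ _ := hsingle.trans hkey

lemma rr_one_le (n : ℕ) : 1 ≤ rr d n := by
  rw [rr, le_div_iff₀ (u_pos hd n), one_mul, u, u]
  exact_mod_cast upsilon_mono hd n

lemma rr_pos (n : ℕ) : 0 < rr d n := lt_of_lt_of_le one_pos (rr_one_le hd n)

lemma key_real (n : ℕ) :
    ∑ k ∈ Finset.Icc 1 n, (lambdaCount d k : ℝ) * u d (n-k) ≤ u d n := by
  have := key hd n
  have hcast : ((∑ k ∈ Finset.Icc 1 n, lambdaCount d k * upsilonCount d (n-k) : ℕ) : ℝ)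
      ≤ ((upsilonCount d n : ℕ) : ℝ) := by exact_mod_cast this
  rw [Nat.cast_sum] at hcast
  simpa [u] using hcast

end analysis

/-- the alternating sequence `L, β²/L, L, …` -/
noncomputable def gseq (β L : ℝ) : ℕ → ℝ
  | 0 => L
  | (i+1) => β^2 / gseq β L i

end SAWaux

namespace SAWaux

open Filter

section sub

variable {d : ℕ} {β : ℝ}

lemma gseq_pos (hβ : 0 < β) {L : ℝ} (hL : 0 < L) : ∀ i, 0 < gseq β L i := by
  intro i
  induction i with
  | zero => exact hL
  | succ i ih =>
    rw [gseq]
    exact div_pos (by positivity) ih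

lemma gseq_mul (hβ : 0 < β) {L : ℝ} (hL : 0 < L) (i : ℕ) :
    gseq β L i * gseq β L (i+1) = β^2 := by
  rw [gseq, mul_div_cancel₀]
  exact (gseq_pos hβ hL i).ne'

lemma sub_limit_ge (hd : 0 < d) (hβ : 1 < β)
    (h1 : ∑' j : ℕ, (lambdaCount d (j + 1) : ℝ) / β ^ (j + 1) = 1)
    (hrr : Tendsto (fun n => rr d n * rr d (n+1)) atTop (nhds (β^2)))
    {φ : ℕ → ℕ} (hφ : StrictMono φ) {L : ℝ} (hL : Tendsto (rr d ∘ φ) atTop (nhds L)) :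
    β ≤ L := by
  have hβ0 : (0:ℝ) < β := by linarith
  have hφtop : Tendsto φ atTop atTop := hφ.tendsto_atTop
  have hL1 : 1 ≤ L := ge_of_tendsto' hL fun j => rr_one_le hd (φ j)
  have hLpos : 0 < L := by linarith
  -- limits of r along shifted subsequences
  have hgi : ∀ i, Tendsto (fun j => rr d (φ j - i)) atTop (nhds (gseq β L i)) := by
    intro i
    induction i with
    | zero => exact hL.congr fun j => by simp [Function.comp]
    | succ i ih =>
      have hsub : Tendsto (fun j => φ j - (i+1)) atTop atTop :=
        (tendsto_sub_atTop_nat (i+1)).comp hφtop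
      have hA : Tendsto (fun j => rr d (φ j - (i+1)) * rr d ((φ j - (i+1)) + 1)) atTop
          (nhds (β^2)) := hrr.comp hsub
      have hA' : Tendsto (fun j => rr d (φ j - (i+1)) * rr d (φ j - i)) atTop
          (nhds (β^2)) := by
        apply hA.congr'
        filter_upwards [hφtop.eventually_ge_atTop (i+1)] with j hj
        congr 2
        omega
      have hgne : gseq β L i ≠ 0 := (gseq_pos hβ0 hLpos i).ne'
      have hdiv := hA'.div ih hgne
      rw [gseq]
      apply hdiv.congr
      intro j
      exact mul_div_cancel_right₀ _ (rr_pos hd (φ j - i)).ne'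
  -- limits of ratios u (φ j + 1 - k) / u (φ j)
  set c : ℕ → ℝ := fun k => ∏ i ∈ Finset.Ico 1 k, (gseq β L i)⁻¹ with hc
  have hck : ∀ k, 1 ≤ k →
      Tendsto (fun j => u d (φ j + 1 - k) / u d (φ j)) atTop (nhds (c k)) := by
    intro k hk
    induction k, hk using Nat.le_induction with
    | base =>
      have : c 1 = 1 := by simp [hc]
      rw [this]
      apply tendsto_const_nhds.congr
      intro j
      rw [eq_comm, Nat.add_sub_cancel, div_self (u_pos hd (φ j)).ne']
    | succ k hk ih =>
      have hstep : Tendsto (fun j => (u d (φ j + 1 - k) / u d (φ j)) * (rr d (φ j - k))⁻¹)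
          atTop (nhds (c k * (gseq β L k)⁻¹)) :=
        ih.mul ((hgi k).inv₀ (gseq_pos hβ0 hLpos k).ne')
      have hcsucc : c (k+1) = c k * (gseq β L k)⁻¹ := by
        rw [hc]
        exact Finset.prod_Ico_succ_top hk _
      rw [hcsucc]
      apply hstep.congr'
      filter_upwards [hφtop.eventually_ge_atTop (k+1)] with j hj
      have e1 : φ j + 1 - k = (φ j - k) + 1 := by omega
      have e2 : φ j + 1 - (k+1) = φ j - k := by omega
      rw [rr, e1, e2]
      have p1 := u_pos hd (φ j - k)
      have p2 := u_pos hd ((φ j - k) + 1)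
      have p3 := u_pos hd (φ j)
      field_simp
  -- explicit values of c
  have hc2 : ∀ k, 1 ≤ k → c (k+2) = c k / β^2 := by
    intro k hk
    have e1 : c (k+2) = c (k+1) * (gseq β L (k+1))⁻¹ :=
      Finset.prod_Ico_succ_top (by omega) _
    have e2 : c (k+1) = c k * (gseq β L k)⁻¹ := Finset.prod_Ico_succ_top hk _
    rw [e1, e2, mul_assoc, ← mul_inv, gseq_mul hβ0 hLpos k]
    rw [div_eq_mul_inv]
  have hcval : ∀ s : ℕ, c (2*s+1) = ((β^2)⁻¹)^s ∧ c (2*s+2) = L/β^2 * ((β^2)⁻¹)^s := by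
    intro s
    induction s with
    | zero =>
      constructor
      · simp [hc]
      · have : c 2 = (gseq β L 1)⁻¹ := by
          rw [hc]
          dsimp only
          rw [Finset.prod_Ico_succ_top (le_refl 1)]
          simp
        rw [this]
        have : gseq β L 1 = β^2 / L := by rw [gseq, gseq]
        rw [this]
        simp [div_eq_mul_inv, mul_comm]
    | succ s ih =>
      constructor
      · have e : 2*(s+1)+1 = (2*s+1)+2 := by ring
        rw [e, hc2 _ (by omega), ih.1]
        ring
      · have e : 2*(s+1)+2 = (2*s+2)+2 := by ring
        rw [e, hc2 _ (by omega), ih.2]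
        ring
  have hβne : β ≠ 0 := by linarith
  have hcb : ∀ k, 1 ≤ k → c k = (β^k)⁻¹ * (if k % 2 = 1 then β else L) := by
    intro k hk
    rcases Nat.even_or_odd k with he | ho
    · obtain ⟨s, hs⟩ := he
      have hs' : k = 2*(s-1)+2 := by omega
      have hmod : k % 2 = 0 := by omega
      rw [hs', (hcval (s-1)).2]
      rw [show (2*(s-1)+2) % 2 = 0 by omega]
      simp only [if_neg (by norm_num : ¬ (0:ℕ) = 1)]
      rw [pow_add, inv_pow, ← pow_mul, mul_inv]
      ring
    · obtain ⟨s, hs⟩ := ho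
      rw [hs, (hcval s).1]
      rw [show (2*s+1) % 2 = 1 by omega]
      rw [pow_add, inv_pow, ← pow_mul, pow_one, mul_inv]
      simp [mul_assoc, inv_mul_cancel₀ hβne]
  -- the renewal inequality in the limit
  have hMbound : ∀ M : ℕ, ∑ k ∈ Finset.Icc 1 M,
      ((lambdaCount d k : ℝ) / β^k) * (if k % 2 = 1 then β else L) ≤ L := by
    intro M
    have hsum_t : Tendsto (fun j => ∑ k ∈ Finset.Icc 1 M,
        (lambdaCount d k : ℝ) * (u d (φ j + 1 - k) / u d (φ j)))
        atTop (nhds (∑ k ∈ Finset.Icc 1 M, (lambdaCount d k : ℝ) * c k)) := by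
      apply tendsto_finset_sum
      intro k hk
      exact (hck k (Finset.mem_Icc.mp hk).1).const_mul _
    have hle : ∀ᶠ j in atTop, ∑ k ∈ Finset.Icc 1 M,
        (lambdaCount d k : ℝ) * (u d (φ j + 1 - k) / u d (φ j)) ≤ rr d (φ j) := by
      filter_upwards [hφtop.eventually_ge_atTop M] with j hj
      have hkey := key_real hd (φ j + 1)
      have hsub : Finset.Icc 1 M ⊆ Finset.Icc 1 (φ j + 1) := by
        apply Finset.Icc_subset_Icc le_rfl
        omega
      have htr : ∑ k ∈ Finset.Icc 1 M, (lambdaCount d k : ℝ) * u d (φ j + 1 - k)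
          ≤ u d (φ j + 1) := by
        refine le_trans (Finset.sum_le_sum_of_subset_of_nonneg hsub ?_) hkey
        intro k _ _
        have := (u_pos hd (φ j + 1 - k)).le
        positivity
      have hupos := u_pos hd (φ j)
      have heq2 : ∑ k ∈ Finset.Icc 1 M, (lambdaCount d k : ℝ) * (u d (φ j + 1 - k) / u d (φ j))
          = (∑ k ∈ Finset.Icc 1 M, (lambdaCount d k : ℝ) * u d (φ j + 1 - k)) / u d (φ j) := by
        rw [Finset.sum_div]
        exact Finset.sum_congr rfl fun k _ => by ring
      rw [heq2]
      show _ ≤ u d (φ j + 1) / u d (φ j)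
      gcongr
    have hlim := le_of_tendsto_of_tendsto hsum_t (hL.congr fun j => rfl) hle
    calc ∑ k ∈ Finset.Icc 1 M, ((lambdaCount d k : ℝ) / β^k) * (if k % 2 = 1 then β else L)
        = ∑ k ∈ Finset.Icc 1 M, (lambdaCount d k : ℝ) * c k := by
          apply Finset.sum_congr rfl
          intro k hk
          rw [hcb k (Finset.mem_Icc.mp hk).1]
          ring
      _ ≤ L := hlim
  -- pass to the limit M → ∞
  set f : ℕ → ℝ := fun k => (lambdaCount d k : ℝ) / β^k with hf
  have hfnn : ∀ k, 0 ≤ f k := by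
    intro k
    rw [hf]
    positivity
  have hsummable : Summable (fun j : ℕ => f (j+1)) := by
    by_contra hns
    rw [tsum_eq_zero_of_not_summable hns] at h1
    norm_num at h1
  have hS : Tendsto (fun M => ∑ k ∈ Finset.Icc 1 M, f k) atTop (nhds 1) := by
    have := hsummable.hasSum.tendsto_sum_nat
    rw [h1] at this
    apply this.congr
    intro M
    rw [← Finset.Ico_add_one_right_eq_Icc, Finset.sum_Ico_eq_sum_range]
    apply Finset.sum_congr (by simp)
    intro i _
    rw [add_comm]
  set fo : ℕ → ℝ := fun j => if (j+1) % 2 = 1 then f (j+1) else 0 with hfo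
  have hfonn : ∀ j, 0 ≤ fo j := by
    intro j
    rw [hfo]
    dsimp only
    split
    · exact hfnn _
    · exact le_refl 0
  have hsummable_o : Summable fo := by
    apply Summable.of_nonneg_of_le hfonn _ hsummable
    intro j
    rw [hfo]
    dsimp only
    split
    · exact le_refl _
    · exact hfnn _
  set A := ∑' j, fo j with hA
  have hApos : 1/β ≤ A := by
    have h0 : fo 0 = f 1 := by
      rw [hfo]
      norm_num
    have hle0 := Summable.le_tsum hsummable_o 0 (fun j _ => hfonn j)
    rw [h0] at hle0
    have hf1 : 1/β ≤ f 1 := by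
      rw [hf]
      dsimp only
      rw [pow_one]
      have hl1 : (1:ℝ) ≤ (lambdaCount d 1 : ℝ) := by
        exact_mod_cast one_le_lambdaCount_one hd
      exact div_le_div_of_nonneg_right hl1 hβ0.le |>.trans (le_refl _)
    linarith
  have hAlim : Tendsto (fun M => ∑ k ∈ Finset.Icc 1 M, (if k % 2 = 1 then f k else 0))
      atTop (nhds A) := by
    have hto := hsummable_o.hasSum.tendsto_sum_nat
    apply hto.congr
    intro M
    rw [← Finset.Ico_add_one_right_eq_Icc, Finset.sum_Ico_eq_sum_range]
    apply Finset.sum_congr (by simp)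
    intro i _
    rw [hfo]
    dsimp only
    rw [add_comm 1 i]
  have hrw : ∀ M, ∑ k ∈ Finset.Icc 1 M,
      ((lambdaCount d k : ℝ)/β^k) * (if k % 2 = 1 then β else L)
      = L * (∑ k ∈ Finset.Icc 1 M, f k)
        + (β - L) * (∑ k ∈ Finset.Icc 1 M, (if k % 2 = 1 then f k else 0)) := by
    intro M
    rw [Finset.mul_sum, Finset.mul_sum, ← Finset.sum_add_distrib]
    apply Finset.sum_congr rfl
    intro k _
    by_cases hpar : k % 2 = 1
    · simp only [hf, if_pos hpar]
      ring
    · simp only [hf, if_neg hpar]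
      ring
  have hRHS : Tendsto (fun M => L * (∑ k ∈ Finset.Icc 1 M, f k)
      + (β - L) * (∑ k ∈ Finset.Icc 1 M, (if k % 2 = 1 then f k else 0)))
      atTop (nhds (L * 1 + (β - L) * A)) :=
    (hS.const_mul L).add (hAlim.const_mul (β - L))
  have hfinal : L * 1 + (β - L) * A ≤ L := by
    apply le_of_tendsto hRHS
    apply Filter.Eventually.of_forall
    intro M
    rw [← hrw M]
    exact hMbound M
  have h5 : (β - L) * A ≤ 0 := by linarith
  by_contra hcon
  push_neg at hcon
  have h6 : 0 < (β - L) * A :=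
    mul_pos (by linarith) (lt_of_lt_of_le (by positivity) hApos)
  linarith

end sub

end SAWaux

namespace SAWaux

open Filter

lemma rr_mul {d : ℕ} (hd : 0 < d) (n : ℕ) : rr d n * rr d (n+1) = u d (n+2) / u d n := by
  have h0 := (u_pos hd n).ne'
  have h1 := (u_pos hd (n+1)).ne'
  rw [rr, rr]
  field_simp

end SAWaux


/-- Kesten's relations imply `lim υ_{n+1}/υ_n = β`:
if `β > 1`, `Σ_{j≥1} λ_j β^{−j} = 1`, and `υ_{n+2}/υ_n → β²`, then
`υ_{n+1}/υ_n → β` as `n → ∞`. -/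
theorem tendsto_upsilon_ratio (d : ℕ) (hd : 2 ≤ d) (β : ℝ) (hβ : 1 < β)
    (h1 : ∑' j : ℕ, (lambdaCount d (j + 1) : ℝ) / β ^ (j + 1) = 1)
    (h2 : Filter.Tendsto (fun n : ℕ => (upsilonCount d (n + 2) : ℝ) / (upsilonCount d n : ℝ))
      Filter.atTop (nhds (β ^ 2))) :
    Filter.Tendsto (fun n : ℕ => (upsilonCount d (n + 1) : ℝ) / (upsilonCount d n : ℝ))
      Filter.atTop (nhds β) := by
  open SAWaux Filter in
  show Tendsto (fun n => rr d n) atTop (nhds β)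
  have hd0 : 0 < d := by omega
  have hrr : Tendsto (fun n => SAWaux.rr d n * SAWaux.rr d (n+1)) atTop (nhds (β^2)) := by
    apply h2.congr
    intro n
    exact (SAWaux.rr_mul hd0 n).symm
  have hβ0 : (0:ℝ) < β := by linarith
  -- a uniform bound on the ratios
  obtain ⟨C, hC⟩ := hrr.bddAbove_range
  have hCb : ∀ n, SAWaux.rr d n ≤ C := by
    intro n
    have h3 : SAWaux.rr d n * SAWaux.rr d (n+1) ≤ C := hC (Set.mem_range_self n)
    have h4 := SAWaux.rr_one_le hd0 (n+1)
    have h5 := (SAWaux.rr_pos hd0 n).le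
    nlinarith
  rw [Metric.tendsto_atTop]
  by_contra hcon
  push_neg at hcon
  obtain ⟨ε, hε, hcon⟩ := hcon
  have hfreq : ∀ N, ∃ n > N, ε ≤ dist (SAWaux.rr d n) β := by
    intro N
    obtain ⟨n, hn, h⟩ := hcon (N+1)
    exact ⟨n, by omega, h⟩
  obtain ⟨φ, hφ, hφP⟩ := Nat.exists_strictMono_subsequence hfreq
  have hmem : ∀ j, SAWaux.rr d (φ j) ∈ Set.Icc (1:ℝ) C :=
    fun j => ⟨SAWaux.rr_one_le hd0 _, hCb _⟩
  obtain ⟨LL, _, ψ, hψ, hψlim⟩ :=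
    tendsto_subseq_of_bounded (Metric.isBounded_Icc (1:ℝ) C) hmem
  have hcomp : StrictMono (φ ∘ ψ) := hφ.comp hψ
  have hψlim' : Tendsto (SAWaux.rr d ∘ (φ ∘ ψ)) atTop (nhds LL) := hψlim
  have hβLL : β ≤ LL := SAWaux.sub_limit_ge hd0 hβ h1 hrr hcomp hψlim'
  have hLL0 : LL ≠ 0 := by linarith
  have hs2 : Tendsto (fun j => SAWaux.rr d ((φ ∘ ψ) j) * SAWaux.rr d ((φ ∘ ψ) j + 1)) atTop
      (nhds (β^2)) := hrr.comp hcomp.tendsto_atTop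
  have hdiv := hs2.div hψlim' hLL0
  have h2' : Tendsto (SAWaux.rr d ∘ (fun j => (φ ∘ ψ) j + 1)) atTop (nhds (β^2/LL)) := by
    apply hdiv.congr
    intro j
    exact mul_div_cancel_left₀ _ (SAWaux.rr_pos hd0 ((φ ∘ ψ) j)).ne'
  have hmono' : StrictMono (fun j => (φ ∘ ψ) j + 1) := by
    intro a b hab
    show (φ ∘ ψ) a + 1 < (φ ∘ ψ) b + 1
    have := hcomp hab
    omega
  have hβ2 : β ≤ β^2/LL := SAWaux.sub_limit_ge hd0 hβ h1 hrr hmono' h2'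
  have hLLβ : LL ≤ β := by
    rw [le_div_iff₀ (by linarith : (0:ℝ) < LL)] at hβ2
    nlinarith
  have hLLeq : LL = β := le_antisymm hLLβ hβLL
  have hdist : Tendsto (fun j => dist (SAWaux.rr d ((φ ∘ ψ) j)) β) atTop
      (nhds (dist LL β)) := hψlim'.dist tendsto_const_nhds
  have hfin : ε ≤ dist LL β :=
    ge_of_tendsto hdist (Filter.Eventually.of_forall fun j => hφP (ψ j))
  rw [hLLeq, dist_self] at hfin
  linarith
end

section
/- Existence of the infinite half-space self-avoiding walk: let β > 1 be a real number and suppose that Σ_{j≥1} λ_j β^{−j} = 1 and that lim_{n→∞} υ_{n+2}/υ_n = β². Then for every m ≥ 0 and every σ = [σ_0, …, σ_m] ∈ Υ_m, the limit Q^+(σ) := lim_{n→∞} #{ω ∈ Υ_n : ω_j = σ_j for 0 ≤ j ≤ m} / υ_n exists. Equivalently, the uniform measures μ_n on Υ_n converge weakly (on cylinder sets) as n → ∞. -/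
set_option maxHeartbeats 2000000
set_option linter.unusedVariables false

namespace SAWProof

open Filter Set
open scoped Classical

variable {d : ℕ}

/-! ### Walk values at natural indices (clamped) -/

/-- Value of a walk at a natural index, clamped at `N`. -/
def wk {N : ℕ} (ω : Fin (N + 1) → Fin d → ℤ) (j : ℕ) : Fin d → ℤ :=
  ω ⟨min j N, by omega⟩

lemma wk_eq {N : ℕ} (ω : Fin (N + 1) → Fin d → ℤ) (j : ℕ) (h : j ≤ N) :
    wk ω j = ω ⟨j, by omega⟩ := by
  simp [wk, min_eq_left h]

lemma wk_fin {N : ℕ} (ω : Fin (N + 1) → Fin d → ℤ) (j : Fin (N + 1)) :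
    ω j = wk ω j.1 := by
  rw [wk_eq _ _ (by omega)]

/-! ### `pi1` algebra -/

lemma pi1_sub (a b : Fin d → ℤ) : pi1 (a - b) = pi1 a - pi1 b := by
  unfold pi1; split <;> simp

lemma pi1_add (a b : Fin d → ℤ) : pi1 (a + b) = pi1 a + pi1 b := by
  unfold pi1; split <;> simp

lemma pi1_zero : pi1 (0 : Fin d → ℤ) = 0 := by
  unfold pi1; split <;> simp

/-! ### Characterizations with natural indices -/

lemma mem_upsilon_iff {N : ℕ} (ω : Fin (N + 1) → Fin d → ℤ) :
    ω ∈ Upsilon d N ↔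
      (∀ i : ℕ, i < N → (∑ k : Fin d, |wk ω (i + 1) k - wk ω i k|) = 1) ∧
      (∀ a b : ℕ, a ≤ N → b ≤ N → wk ω a = wk ω b → a = b) ∧
      wk ω 0 = 0 ∧
      (∀ j : ℕ, 1 ≤ j → j ≤ N → 0 < pi1 (wk ω j)) := by
  constructor
  · rintro ⟨⟨hs, hinj⟩, h0, hpos⟩
    refine ⟨fun i hi => ?_, fun a b ha hb hab => ?_, ?_, fun j hj1 hjN => ?_⟩
    · rw [wk_eq ω (i + 1) (by omega), wk_eq ω i (by omega)]
      exact hs ⟨i, hi⟩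
    · rw [wk_eq ω a ha, wk_eq ω b hb] at hab
      exact congrArg Fin.val (hinj hab)
    · rw [wk_eq ω 0 (by omega)]
      exact h0
    · rw [wk_eq ω j hjN]
      exact hpos ⟨j, by omega⟩ hj1
  · rintro ⟨hs, hinj, h0, hpos⟩
    refine ⟨⟨fun i => ?_, fun a b hab => ?_⟩, ?_, fun j hj => ?_⟩
    · have := hs i.1 i.2
      rw [wk_eq ω (i.1 + 1) (by omega), wk_eq ω i.1 (by omega)] at this
      exact this
    · apply Fin.ext
      apply hinj a.1 b.1 (by omega) (by omega)
      rw [wk_eq ω a.1 (by omega), wk_eq ω b.1 (by omega)]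
      exact hab
    · have := h0
      rw [wk_eq ω 0 (by omega)] at this
      exact this
    · have := hpos j.1 hj (by omega)
      rw [wk_eq ω j.1 (by omega)] at this
      exact this

lemma hasRenewalAt_iff {N : ℕ} (ω : Fin (N + 1) → Fin d → ℤ) (j : ℕ) :
    HasRenewalAt ω j ↔ 1 ≤ j ∧ j < N ∧ ∀ a b : ℕ, a ≤ j → j < b → b ≤ N →
      pi1 (wk ω a) ≤ pi1 (wk ω j) ∧ pi1 (wk ω j) < pi1 (wk ω b) := by
  constructor
  · rintro ⟨hj1, hjN, h⟩
    refine ⟨hj1, hjN, fun a b ha hb hbN => ?_⟩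
    rw [wk_eq ω a (by omega), wk_eq ω j (by omega), wk_eq ω b (by omega)]
    exact h ⟨a, by omega⟩ ⟨b, by omega⟩ ha hb
  · rintro ⟨hj1, hjN, h⟩
    refine ⟨hj1, hjN, fun a b ha hb => ?_⟩
    have := h a.1 b.1 ha hb (by omega)
    rw [wk_eq ω a.1 (by omega), wk_eq ω j (by omega), wk_eq ω b.1 (by omega)] at this
    exact this

lemma isIrrBridge_iff {N : ℕ} (ω : Fin (N + 1) → Fin d → ℤ) :
    IsIrrBridge d N ω ↔ ω ∈ Upsilon d N ∧
      (∀ j : ℕ, j ≤ N → pi1 (wk ω j) ≤ pi1 (wk ω N)) ∧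
      (∀ j : ℕ, ¬ HasRenewalAt ω j) := by
  unfold IsIrrBridge IsBridge
  constructor
  · rintro ⟨⟨hup, hbr⟩, hirr⟩
    refine ⟨hup, fun j hj => ?_, hirr⟩
    rw [wk_eq ω j hj, wk_eq ω N (le_refl N)]
    exact hbr ⟨j, by omega⟩
  · rintro ⟨hup, hbr, hirr⟩
    refine ⟨⟨hup, fun j => ?_⟩, hirr⟩
    have := hbr j.1 (by omega)
    rw [wk_eq ω j.1 (by omega), wk_eq ω N (le_refl N)] at this
    exact this

/-! ### Restriction, suffix, concatenation -/

/-- Initial segment of length `k` of a walk. -/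
def resW {N : ℕ} (k : ℕ) (ω : Fin (N + 1) → Fin d → ℤ) : Fin (k + 1) → Fin d → ℤ :=
  fun j => wk ω j.1

/-- Shifted suffix of a walk from time `k`. -/
def sufW {N : ℕ} (k : ℕ) (ω : Fin (N + 1) → Fin d → ℤ) : Fin (N - k + 1) → Fin d → ℤ :=
  fun j => wk ω (k + j.1) - wk ω k

/-- Concatenation of a `k`-step walk with an `(N-k)`-step walk. -/
def catW {N : ℕ} (k : ℕ) (ξ : Fin (k + 1) → Fin d → ℤ) (τ : Fin (N - k + 1) → Fin d → ℤ) :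
    Fin (N + 1) → Fin d → ℤ :=
  fun j => if j.1 ≤ k then wk ξ j.1 else wk ξ k + wk τ (j.1 - k)

lemma wk_resW {N k : ℕ} (hk : k ≤ N) (ω : Fin (N + 1) → Fin d → ℤ) (j : ℕ) (hj : j ≤ k) :
    wk (resW k ω) j = wk ω j := by
  rw [wk_eq _ _ hj]; rfl

lemma wk_sufW {N k : ℕ} (ω : Fin (N + 1) → Fin d → ℤ) (j : ℕ) (hj : j ≤ N - k) :
    wk (sufW k ω) j = wk ω (k + j) - wk ω k := by
  rw [wk_eq _ _ hj]; rfl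

lemma sufW_zero {N k : ℕ} (ω : Fin (N + 1) → Fin d → ℤ) : wk (sufW k ω) 0 = 0 := by
  rw [wk_sufW _ _ (Nat.zero_le _)]
  simp

lemma wk_catW_le {N k : ℕ} (hk : k ≤ N) (ξ : Fin (k + 1) → Fin d → ℤ)
    (τ : Fin (N - k + 1) → Fin d → ℤ) (j : ℕ) (hj : j ≤ k) :
    wk (catW k ξ τ) j = wk ξ j := by
  rw [wk_eq _ _ (le_trans hj hk)]
  show (if j ≤ k then _ else _) = _
  rw [if_pos hj]

lemma wk_catW_ge {N k : ℕ} (hk : k ≤ N) (ξ : Fin (k + 1) → Fin d → ℤ)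
    (τ : Fin (N - k + 1) → Fin d → ℤ) (h0 : wk τ 0 = 0) (j : ℕ) (hjk : k ≤ j) (hjN : j ≤ N) :
    wk (catW k ξ τ) j = wk ξ k + wk τ (j - k) := by
  rw [wk_eq _ _ hjN]
  show (if j ≤ k then wk ξ j else wk ξ k + wk τ (j - k)) = wk ξ k + wk τ (j - k)
  rcases eq_or_lt_of_le hjk with h | h
  · subst h
    simp [h0]
  · rw [if_neg (by omega)]

/-! ### Membership lemmas -/

lemma resW_mem {N k : ℕ} (hk : k ≤ N) {ω : Fin (N + 1) → Fin d → ℤ}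
    (hω : ω ∈ Upsilon d N) : resW k ω ∈ Upsilon d k := by
  rw [mem_upsilon_iff] at hω ⊢
  obtain ⟨hs, hinj, h0, hpos⟩ := hω
  refine ⟨fun i hi => ?_, fun a b ha hb hab => ?_, ?_, fun j hj1 hjk => ?_⟩
  · rw [wk_resW hk ω (i + 1) (by omega), wk_resW hk ω i (by omega)]
    exact hs i (by omega)
  · rw [wk_resW hk ω a ha, wk_resW hk ω b hb] at hab
    exact hinj a b (by omega) (by omega) hab
  · rw [wk_resW hk ω 0 (by omega)]; exact h0
  · rw [wk_resW hk ω j hjk]; exact hpos j hj1 (by omega)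

lemma sufW_mem {N k : ℕ} (hk : k ≤ N) {ω : Fin (N + 1) → Fin d → ℤ}
    (hω : ω ∈ Upsilon d N)
    (hstrict : ∀ b : ℕ, k < b → b ≤ N → pi1 (wk ω k) < pi1 (wk ω b)) :
    sufW k ω ∈ Upsilon d (N - k) := by
  rw [mem_upsilon_iff] at hω ⊢
  obtain ⟨hs, hinj, h0, hpos⟩ := hω
  refine ⟨fun i hi => ?_, fun a b ha hb hab => ?_, sufW_zero ω, fun j hj1 hjk => ?_⟩
  · have := hs (k + i) (by omega)
    rw [wk_sufW ω (i + 1) (by omega), wk_sufW ω i (by omega),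
        show k + (i + 1) = k + i + 1 from by omega]
    simpa [Pi.sub_apply, sub_sub_sub_cancel_right] using this
  · rw [wk_sufW ω a ha, wk_sufW ω b hb] at hab
    have h2 : wk ω (k + a) = wk ω (k + b) := sub_left_inj.mp hab
    have := hinj (k + a) (k + b) (by omega) (by omega) h2
    omega
  · rw [wk_sufW ω j (by omega), pi1_sub, sub_pos]
    exact hstrict (k + j) (by omega) (by omega)

lemma catW_mem {N k : ℕ} (hk1 : 1 ≤ k) (hk : k ≤ N)
    {ξ : Fin (k + 1) → Fin d → ℤ} {τ : Fin (N - k + 1) → Fin d → ℤ}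
    (hξ : ξ ∈ Upsilon d k)
    (hbr : ∀ j : ℕ, j ≤ k → pi1 (wk ξ j) ≤ pi1 (wk ξ k))
    (hτ : τ ∈ Upsilon d (N - k)) :
    catW k ξ τ ∈ Upsilon d N := by
  have hτ0 : wk τ 0 = 0 := ((mem_upsilon_iff τ).1 hτ).2.2.1
  rw [mem_upsilon_iff] at hξ hτ ⊢
  obtain ⟨hsξ, hinjξ, h0ξ, hposξ⟩ := hξ
  obtain ⟨hsτ, hinjτ, h0τ, hposτ⟩ := hτ
  refine ⟨fun i hi => ?_, fun a b ha hb hab => ?_, ?_, fun j hj1 hjN => ?_⟩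
  · rcases le_or_gt (i + 1) k with h | h
    · rw [wk_catW_le hk ξ τ (i + 1) h, wk_catW_le hk ξ τ i (by omega)]
      exact hsξ i (by omega)
    · rw [wk_catW_ge hk ξ τ hτ0 (i + 1) (by omega) (by omega),
          wk_catW_ge hk ξ τ hτ0 i (by omega) (by omega)]
      have := hsτ (i - k) (by omega)
      rw [show i + 1 - k = (i - k) + 1 from by omega]
      simpa [Pi.add_apply, add_sub_add_left_eq_sub] using this
  · rcases le_or_gt a k with hak | hak <;> rcases le_or_gt b k with hbk | hbk
    · rw [wk_catW_le hk ξ τ a hak, wk_catW_le hk ξ τ b hbk] at hab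
      exact hinjξ a b hak hbk hab
    · exfalso
      rw [wk_catW_le hk ξ τ a hak, wk_catW_ge hk ξ τ hτ0 b (by omega) hb] at hab
      have h1 : pi1 (wk ξ a) ≤ pi1 (wk ξ k) := hbr a hak
      have h2 : 0 < pi1 (wk τ (b - k)) := hposτ (b - k) (by omega) (by omega)
      have h3 := congrArg pi1 hab
      rw [pi1_add] at h3
      omega
    · exfalso
      rw [wk_catW_le hk ξ τ b hbk, wk_catW_ge hk ξ τ hτ0 a (by omega) ha] at hab
      have h1 : pi1 (wk ξ b) ≤ pi1 (wk ξ k) := hbr b hbk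
      have h2 : 0 < pi1 (wk τ (a - k)) := hposτ (a - k) (by omega) (by omega)
      have h3 := congrArg pi1 hab
      rw [pi1_add] at h3
      omega
    · rw [wk_catW_ge hk ξ τ hτ0 a (by omega) ha,
          wk_catW_ge hk ξ τ hτ0 b (by omega) hb] at hab
      have h2 := add_left_cancel hab
      have := hinjτ (a - k) (b - k) (by omega) (by omega) h2
      omega
  · rw [wk_catW_le hk ξ τ 0 (by omega)]; exact h0ξ
  · rcases le_or_gt j k with h | h
    · rw [wk_catW_le hk ξ τ j h]; exact hposξ j hj1 h
    · rw [wk_catW_ge hk ξ τ hτ0 j (by omega) hjN, pi1_add]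
      have h1 := hposξ k hk1 (le_refl k)
      have h2 := hposτ (j - k) (by omega) (by omega)
      omega

lemma catW_leastRenewal {N k : ℕ} (hk1 : 1 ≤ k) (hk : k < N)
    {ξ : Fin (k + 1) → Fin d → ℤ} {τ : Fin (N - k + 1) → Fin d → ℤ}
    (hξ : ξ ∈ Upsilon d k)
    (hbr : ∀ j : ℕ, j ≤ k → pi1 (wk ξ j) ≤ pi1 (wk ξ k))
    (hirr : ∀ j : ℕ, ¬ HasRenewalAt ξ j)
    (hτ : τ ∈ Upsilon d (N - k)) :
    LeastRenewal (catW k ξ τ) k := by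
  have hkle : k ≤ N := le_of_lt hk
  have hτ0 : wk τ 0 = 0 := ((mem_upsilon_iff τ).1 hτ).2.2.1
  have hposτ : ∀ j : ℕ, 1 ≤ j → j ≤ N - k → 0 < pi1 (wk τ j) :=
    ((mem_upsilon_iff τ).1 hτ).2.2.2
  constructor
  · rw [hasRenewalAt_iff]
    refine ⟨hk1, hk, fun a b ha hb hbN => ?_⟩
    constructor
    · rw [wk_catW_le hkle ξ τ a ha, wk_catW_le hkle ξ τ k (le_refl k)]
      exact hbr a ha
    · rw [wk_catW_le hkle ξ τ k (le_refl k), wk_catW_ge hkle ξ τ hτ0 b (by omega) hbN,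
          pi1_add]
      have := hposτ (b - k) (by omega) (by omega)
      omega
  · intro j hjk hren
    rw [hasRenewalAt_iff] at hren
    obtain ⟨hj1, hjN, h⟩ := hren
    apply hirr j
    rw [hasRenewalAt_iff]
    refine ⟨hj1, by omega, fun a b ha hb hbk => ?_⟩
    have := h a b ha hb (by omega)
    rw [wk_catW_le hkle ξ τ a (by omega), wk_catW_le hkle ξ τ j (by omega),
        wk_catW_le hkle ξ τ b hbk] at this
    exact this

lemma leastRenewal_resW {N k : ℕ} {ω : Fin (N + 1) → Fin d → ℤ}
    (hω : ω ∈ Upsilon d N) (hl : LeastRenewal ω k) : IsIrrBridge d k (resW k ω) := by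
  obtain ⟨hren, hmin⟩ := hl
  rw [hasRenewalAt_iff] at hren
  obtain ⟨hk1, hkN, h⟩ := hren
  have hk : k ≤ N := le_of_lt hkN
  rw [isIrrBridge_iff]
  refine ⟨resW_mem hk hω, fun j hj => ?_, fun j hren' => ?_⟩
  · rw [wk_resW hk ω j hj, wk_resW hk ω k (le_refl k)]
    exact (h j N hj (by omega) (le_refl N)).1
  · rw [hasRenewalAt_iff] at hren'
    obtain ⟨hj1, hjk, h'⟩ := hren'
    apply hmin j hjk
    rw [hasRenewalAt_iff]
    refine ⟨hj1, by omega, fun a b ha hb hbN => ?_⟩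
    rcases le_or_gt b k with hbk | hbk
    · have := h' a b ha hb hbk
      rw [wk_resW hk ω a (by omega), wk_resW hk ω j (by omega),
          wk_resW hk ω b hbk] at this
      exact this
    · constructor
      · have := (h' a k ha hjk (le_refl k)).1
        rw [wk_resW hk ω a (by omega), wk_resW hk ω j (by omega)] at this
        exact this
      · have h1 := (h' j k (le_refl j) hjk (le_refl k)).2
        rw [wk_resW hk ω j (by omega), wk_resW hk ω k (by omega)] at h1
        have h2 := (h k b (le_refl k) hbk hbN).2
        omega

lemma leastRenewal_sufW {N k : ℕ} {ω : Fin (N + 1) → Fin d → ℤ}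
    (hω : ω ∈ Upsilon d N) (hl : LeastRenewal ω k) : sufW k ω ∈ Upsilon d (N - k) := by
  obtain ⟨hren, -⟩ := hl
  rw [hasRenewalAt_iff] at hren
  obtain ⟨hk1, hkN, h⟩ := hren
  exact sufW_mem (by omega) hω (fun b hb hbN => (h k b (le_refl k) hb hbN).2)

lemma catW_resW_sufW {N k : ℕ} (hk : k ≤ N) {ω : Fin (N + 1) → Fin d → ℤ} :
    catW k (resW k ω) (sufW k ω) = ω := by
  funext j
  show (if j.1 ≤ k then wk (resW k ω) j.1
        else wk (resW k ω) k + wk (sufW k ω) (j.1 - k)) = ω j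
  rcases le_or_gt j.1 k with h | h
  · rw [if_pos h, wk_resW hk ω j.1 h, wk_fin ω j]
  · rw [if_neg (by omega), wk_resW hk ω k (le_refl k), wk_sufW ω (j.1 - k) (by omega),
        show k + (j.1 - k) = j.1 from by omega, wk_fin ω j]
    abel

/-! ### Cylinder (extension) sets -/

/-- Walks of length `N` extending the initial segment `σ` (of length `m`). -/
def ExtS (d m N : ℕ) (σ : Fin (m + 1) → Fin d → ℤ) : Set (Fin (N + 1) → Fin d → ℤ) :=
  {ω | ω ∈ Upsilon d N ∧ ∀ j : ℕ, j ≤ m → wk ω j = wk σ j}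

/-- Irreducible bridges of length `k` compatible with `σ`. -/
def PreS (d m k : ℕ) (σ : Fin (m + 1) → Fin d → ℤ) : Set (Fin (k + 1) → Fin d → ℤ) :=
  {ξ | IsIrrBridge d k ξ ∧ ∀ j : ℕ, j ≤ min k m → wk ξ j = wk σ j}

/-- Extensions of `σ` with no renewal time at all. -/
def NoRen (d m N : ℕ) (σ : Fin (m + 1) → Fin d → ℤ) : Set (Fin (N + 1) → Fin d → ℤ) :=
  {ω | ω ∈ ExtS d m N σ ∧ ∀ j : ℕ, ¬ HasRenewalAt ω j}

/-! ### Finiteness -/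

lemma walk_bound {N : ℕ} {ω : Fin (N + 1) → Fin d → ℤ} (hω : ω ∈ Upsilon d N) :
    ∀ j : ℕ, j ≤ N → ∀ i : Fin d, |wk ω j i| ≤ (j : ℤ) := by
  obtain ⟨hs, hinj, h0, hpos⟩ := (mem_upsilon_iff ω).1 hω
  intro j
  induction j with
  | zero => intro _ i; rw [h0]; simp
  | succ n ih =>
    intro hn i
    have h1 := ih (by omega) i
    have h2 : |wk ω (n + 1) i - wk ω n i| ≤ 1 := by
      have hsum := hs n (by omega)
      calc |wk ω (n + 1) i - wk ω n i|
          ≤ ∑ k : Fin d, |wk ω (n + 1) k - wk ω n k| :=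
            Finset.single_le_sum (f := fun k : Fin d => |wk ω (n + 1) k - wk ω n k|)
              (fun k _ => abs_nonneg _) (Finset.mem_univ i)
        _ = 1 := hsum
    have h3 : |wk ω (n + 1) i| ≤ |wk ω (n + 1) i - wk ω n i| + |wk ω n i| := by
      calc |wk ω (n + 1) i| = |(wk ω (n + 1) i - wk ω n i) + wk ω n i| := by congr 1; ring
        _ ≤ _ := abs_add_le _ _
    push_cast
    push_cast at h1
    linarith

lemma upsilon_finite (d N : ℕ) : (Upsilon d N).Finite := by
  apply Set.Finite.subset (Set.Finite.pi (fun j : Fin (N + 1) =>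
    Set.Finite.pi (fun i : Fin d => Set.finite_Icc (-(N : ℤ)) (N : ℤ))))
  intro ω hω
  rw [Set.mem_univ_pi]
  intro j
  rw [Set.mem_univ_pi]
  intro i
  rw [Set.mem_Icc, ← abs_le]
  have h1 := walk_bound hω j.1 (by omega) i
  rw [← wk_fin ω j] at h1
  refine le_trans h1 ?_
  exact_mod_cast (by omega : j.1 ≤ N)

lemma extS_finite (d m N : ℕ) (σ : Fin (m + 1) → Fin d → ℤ) : (ExtS d m N σ).Finite :=
  Set.Finite.subset (upsilon_finite d N) (fun ω h => h.1)

lemma irr_finite (d k : ℕ) : {ω : Fin (k + 1) → Fin d → ℤ | IsIrrBridge d k ω}.Finite :=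
  Set.Finite.subset (upsilon_finite d k) (fun ω h => h.1.1)

lemma preS_finite (d m k : ℕ) (σ : Fin (m + 1) → Fin d → ℤ) : (PreS d m k σ).Finite :=
  Set.Finite.subset (irr_finite d k) (fun ξ h => h.1)

/-! ### Basic counts -/

/-- The straight walk along the first coordinate. -/
def stW (d N : ℕ) : Fin (N + 1) → Fin d → ℤ := fun j i => if i.1 = 0 then (j.1 : ℤ) else 0

lemma wk_stW {N : ℕ} (j : ℕ) (hj : j ≤ N) :
    wk (stW d N) j = fun i : Fin d => if i.1 = 0 then (j : ℤ) else 0 := by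
  rw [wk_eq _ _ hj]; rfl

lemma stW_mem (hd0 : 0 < d) (N : ℕ) : stW d N ∈ Upsilon d N := by
  rw [mem_upsilon_iff]
  refine ⟨fun i hi => ?_, fun a b ha hb hab => ?_, ?_, fun j hj1 hjN => ?_⟩
  · rw [wk_stW (i + 1) (by omega), wk_stW i (by omega)]
    have key : ∀ x : Fin d,
        |(if x.1 = 0 then ((i + 1 : ℕ) : ℤ) else 0) - (if x.1 = 0 then (i : ℤ) else 0)|
          = if x = (⟨0, hd0⟩ : Fin d) then 1 else 0 := by
      intro x
      by_cases h : x.1 = 0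
      · rw [if_pos h, if_pos h, if_pos (Fin.ext h)]
        push_cast
        simp
      · rw [if_neg h, if_neg h, if_neg (fun hc => h (by rw [hc]))]
        simp
    rw [Finset.sum_congr rfl (fun x _ => key x)]
    simp
  · rw [wk_stW a ha, wk_stW b hb] at hab
    have := congrFun hab ⟨0, hd0⟩
    simp at this
    exact_mod_cast this
  · rw [wk_stW 0 (by omega)]; funext i; simp
  · rw [wk_stW j hjN]
    unfold pi1
    rw [dif_pos hd0]
    simp only [if_pos rfl]
    exact_mod_cast hj1

lemma upsilon_pos (hd0 : 0 < d) (N : ℕ) : 0 < upsilonCount d N :=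
  (Set.ncard_pos (upsilon_finite d N)).2 ⟨stW d N, stW_mem hd0 N⟩

lemma lambda_one_pos (hd0 : 0 < d) : 1 ≤ lambdaCount d 1 := by
  apply (Set.ncard_pos (irr_finite d 1)).2
  refine ⟨stW d 1, ?_⟩
  rw [Set.mem_setOf_eq, isIrrBridge_iff]
  refine ⟨stW_mem hd0 1, fun j hj => ?_, fun j hren => ?_⟩
  · rw [wk_stW j hj, wk_stW 1 (le_refl 1)]
    unfold pi1
    rw [dif_pos hd0, dif_pos hd0]
    show (if (0 : ℕ) = 0 then (j : ℤ) else 0) ≤ (if (0 : ℕ) = 0 then ((1 : ℕ) : ℤ) else 0)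
    rw [if_pos rfl, if_pos rfl]
    exact_mod_cast hj
  · rw [hasRenewalAt_iff] at hren
    omega

lemma extS_le_upsilon (d m N : ℕ) (σ : Fin (m + 1) → Fin d → ℤ) :
    (ExtS d m N σ).ncard ≤ upsilonCount d N :=
  Set.ncard_le_ncard (fun ω h => h.1) (upsilon_finite d N)

lemma preS_le_lambda (d m k : ℕ) (σ : Fin (m + 1) → Fin d → ℤ) :
    (PreS d m k σ).ncard ≤ lambdaCount d k :=
  Set.ncard_le_ncard (fun ξ h => h.1) (irr_finite d k)

/-! ### Counting helpers -/

lemma resW_catW {N k : ℕ} (hk : k ≤ N) (ξ : Fin (k + 1) → Fin d → ℤ)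
    (τ : Fin (N - k + 1) → Fin d → ℤ) : resW k (catW k ξ τ) = ξ := by
  funext j
  show wk (catW k ξ τ) j.1 = ξ j
  rw [wk_catW_le hk ξ τ j.1 (by omega), wk_fin ξ j]

lemma sufW_catW {N k : ℕ} (hk : k ≤ N) (ξ : Fin (k + 1) → Fin d → ℤ)
    (τ : Fin (N - k + 1) → Fin d → ℤ) (hτ0 : wk τ 0 = 0) : sufW k (catW k ξ τ) = τ := by
  funext j
  show wk (catW k ξ τ) (k + j.1) - wk (catW k ξ τ) k = τ j
  rw [wk_catW_ge hk ξ τ hτ0 (k + j.1) (by omega) (by omega),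
      wk_catW_le hk ξ τ k (le_refl k),
      show k + j.1 - k = j.1 from by omega, wk_fin τ j]
  abel

lemma ncard_prod {α γ : Type*} (s : Set α) (t : Set γ) :
    (s ×ˢ t).ncard = s.ncard * t.ncard := by
  rw [← Nat.card_coe_set_eq, ← Nat.card_coe_set_eq, ← Nat.card_coe_set_eq,
      Nat.card_congr (Equiv.Set.prod s t), Nat.card_prod]

lemma ncard_finset_biUnion {ι α : Type*} (s : Finset ι) (C : ι → Set α)
    (hfin : ∀ i ∈ s, (C i).Finite)
    (hdisj : ∀ i ∈ s, ∀ j ∈ s, i ≠ j → Disjoint (C i) (C j)) :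
    (⋃ i ∈ s, C i).ncard = ∑ i ∈ s, (C i).ncard := by
  classical
  induction s using Finset.induction_on with
  | empty => simp
  | @insert a s' ha ih =>
    rw [Finset.set_biUnion_insert, Finset.sum_insert ha]
    rw [Set.ncard_union_eq ?_ (hfin a (Finset.mem_insert_self a s')) ?_]
    · rw [ih (fun i hi => hfin i (Finset.mem_insert_of_mem hi))
        (fun i hi j hj hij => hdisj i (Finset.mem_insert_of_mem hi)
          j (Finset.mem_insert_of_mem hj) hij)]
    · rw [Set.disjoint_iUnion_right]
      intro i
      rw [Set.disjoint_iUnion_right]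
      intro hi
      exact hdisj a (Finset.mem_insert_self a s') i (Finset.mem_insert_of_mem hi)
        (fun h => ha (h ▸ hi))
    · exact Set.Finite.biUnion (Set.finite_mem_finset s')
        (fun i hi => hfin i (Finset.mem_insert_of_mem hi))

/-! ### The master decomposition -/

lemma class_eq_image {m N k : ℕ} (hm : m ≤ N) (hk1 : 1 ≤ k) (hkN : k < N)
    (σ : Fin (m + 1) → Fin d → ℤ) :
    {ω | ω ∈ ExtS d m N σ ∧ LeastRenewal ω k}
      = (fun p : (Fin (k + 1) → Fin d → ℤ) × (Fin (N - k + 1) → Fin d → ℤ) =>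
          catW k p.1 p.2) '' ((PreS d m k σ) ×ˢ (ExtS d (m - k) (N - k) (sufW k σ))) := by
  have hkN' : k ≤ N := le_of_lt hkN
  ext ω
  simp only [Set.mem_setOf_eq, Set.mem_image, Set.mem_prod]
  constructor
  · rintro ⟨⟨hωup, hmatch⟩, hleast⟩
    refine ⟨(resW k ω, sufW k ω), ⟨⟨leastRenewal_resW hωup hleast, fun j hj => ?_⟩,
      ⟨leastRenewal_sufW hωup hleast, fun j hj => ?_⟩⟩, catW_resW_sufW hkN'⟩
    · rw [wk_resW hkN' ω j (by omega)]
      exact hmatch j (by omega)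
    · by_cases hkm : k < m
      · rw [wk_sufW ω j (by omega), wk_sufW σ j (by omega), hmatch (k + j) (by omega),
          hmatch k (by omega)]
      · have hj0 : j = 0 := by omega
        subst hj0
        rw [sufW_zero, sufW_zero]
  · rintro ⟨⟨ξ, τ⟩, ⟨⟨hIrr, hmatchξ⟩, ⟨hτup, hmatchτ⟩⟩, rfl⟩
    obtain ⟨hξup, hbr, hirr⟩ := (isIrrBridge_iff ξ).1 hIrr
    have hτ0 : wk τ 0 = 0 := ((mem_upsilon_iff τ).1 hτup).2.2.1
    refine ⟨⟨catW_mem hk1 hkN' hξup hbr hτup, fun j hj => ?_⟩,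
      catW_leastRenewal hk1 hkN hξup hbr hirr hτup⟩
    rcases le_or_gt j k with hjk | hjk
    · rw [wk_catW_le hkN' ξ τ j hjk]
      exact hmatchξ j (by omega)
    · have hkm : k < m := lt_of_lt_of_le hjk hj
      rw [wk_catW_ge hkN' ξ τ hτ0 j (by omega) (by omega),
          hmatchτ (j - k) (by omega), wk_sufW σ (j - k) (by omega),
          hmatchξ k (by omega), show k + (j - k) = j from by omega]
      abel

lemma class_card {m N k : ℕ} (hm : m ≤ N) (hk1 : 1 ≤ k) (hkN : k < N)
    (σ : Fin (m + 1) → Fin d → ℤ) :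
    {ω | ω ∈ ExtS d m N σ ∧ LeastRenewal ω k}.ncard
      = (PreS d m k σ).ncard * (ExtS d (m - k) (N - k) (sufW k σ)).ncard := by
  rw [class_eq_image hm hk1 hkN σ]
  rw [Set.ncard_image_of_injOn ?_, ncard_prod]
  rintro ⟨ξ, τ⟩ ⟨hξ, hτ⟩ ⟨ξ', τ'⟩ ⟨hξ', hτ'⟩ heq
  have hτ0 : wk τ 0 = 0 := ((mem_upsilon_iff τ).1 hτ.1).2.2.1
  have hτ0' : wk τ' 0 = 0 := ((mem_upsilon_iff τ').1 hτ'.1).2.2.1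
  have e1 : ξ = ξ' := by
    have := congrArg (resW k) heq
    rwa [resW_catW (le_of_lt hkN), resW_catW (le_of_lt hkN)] at this
  have e2 : τ = τ' := by
    have := congrArg (sufW k) heq
    rwa [sufW_catW (le_of_lt hkN) _ _ hτ0, sufW_catW (le_of_lt hkN) _ _ hτ0'] at this
  rw [Prod.mk.injEq]
  exact ⟨e1, e2⟩

lemma master {m N : ℕ} (hm : m ≤ N) (hN : 1 ≤ N) (σ : Fin (m + 1) → Fin d → ℤ) :
    (ExtS d m N σ).ncard
      = (NoRen d m N σ).ncard
        + ∑ k ∈ Finset.Ico 1 N,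
            (PreS d m k σ).ncard * (ExtS d (m - k) (N - k) (sufW k σ)).ncard := by
  classical
  have hfinC : ∀ k : ℕ, ({ω | ω ∈ ExtS d m N σ ∧ LeastRenewal ω k}).Finite :=
    fun k => Set.Finite.subset (extS_finite d m N σ) (fun ω h => h.1)
  have hpart : ExtS d m N σ = NoRen d m N σ
      ∪ ⋃ k ∈ Finset.Ico 1 N, {ω | ω ∈ ExtS d m N σ ∧ LeastRenewal ω k} := by
    ext ω
    simp only [NoRen, Set.mem_union, Set.mem_setOf_eq, Set.mem_iUnion, exists_prop]
    constructor
    · intro h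
      by_cases hren : ∀ j : ℕ, ¬ HasRenewalAt ω j
      · exact Or.inl ⟨h, hren⟩
      · right
        push_neg at hren
        have hex : ∃ j, HasRenewalAt ω j := hren
        set k := Nat.find hex with hkdef
        have hk := Nat.find_spec hex
        have hkr := (hasRenewalAt_iff ω k).1 hk
        exact ⟨k, Finset.mem_Ico.2 ⟨hkr.1, hkr.2.1⟩,
          ⟨h, hk, fun j hj => Nat.find_min hex hj⟩⟩
    · rintro (⟨h, _⟩ | ⟨k, hk, h, _⟩) <;> exact h
  have hdisj1 : Disjoint (NoRen d m N σ)
      (⋃ k ∈ Finset.Ico 1 N, {ω | ω ∈ ExtS d m N σ ∧ LeastRenewal ω k}) := by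
    rw [Set.disjoint_left]
    rintro ω ⟨hω, hnone⟩ hmem
    simp only [Set.mem_iUnion, Set.mem_setOf_eq, exists_prop] at hmem
    obtain ⟨k, -, -, hk, -⟩ := hmem
    exact hnone k hk
  rw [hpart, Set.ncard_union_eq hdisj1
    (Set.Finite.subset (extS_finite d m N σ) (fun ω h => h.1))
    (by exact Set.Finite.biUnion (Set.finite_mem_finset (Finset.Ico 1 N)) (fun k _ => hfinC k)),
    ncard_finset_biUnion _ _ (fun k _ => hfinC k) ?_]
  · congr 1
    apply Finset.sum_congr rfl
    intro k hk
    rw [Finset.mem_Ico] at hk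
    exact class_card hm hk.1 hk.2 σ
  · intro i hi j hj hij
    rw [Set.disjoint_left]
    rintro ω ⟨-, hli⟩ ⟨-, hlj⟩
    rcases lt_or_gt_of_ne hij with h | h
    · exact hlj.2 i h hli.1
    · exact hli.2 j h hlj.1

/-! ### Evaluations of the pieces -/

lemma extS_zero_eq_upsilon {X : ℕ} (τ : Fin 1 → Fin d → ℤ) (hτ : wk τ 0 = 0) :
    ExtS d 0 X τ = Upsilon d X := by
  ext ω
  simp only [ExtS, Set.mem_setOf_eq]
  constructor
  · exact fun h => h.1
  · intro h
    refine ⟨h, fun j hj => ?_⟩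
    have hj0 : j = 0 := by omega
    subst hj0
    rw [hτ, ((mem_upsilon_iff ω).1 h).2.2.1]

lemma preS_zero (k : ℕ) (σ : Fin 1 → Fin d → ℤ) (hσ : wk σ 0 = 0) :
    PreS d 0 k σ = {ω : Fin (k + 1) → Fin d → ℤ | IsIrrBridge d k ω} := by
  ext ξ
  simp only [PreS, Set.mem_setOf_eq]
  constructor
  · exact fun h => h.1
  · intro h
    refine ⟨h, fun j hj => ?_⟩
    have hj0 : j = 0 := by omega
    subst hj0
    rw [hσ, ((mem_upsilon_iff ξ).1 h.1.1).2.2.1]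

lemma preS_lt {m k : ℕ} (hk : k < m) (σ : Fin (m + 1) → Fin d → ℤ) :
    (PreS d m k σ).ncard = if IsIrrBridge d k (resW k σ) then 1 else 0 := by
  by_cases hI : IsIrrBridge d k (resW k σ)
  · rw [if_pos hI]
    have hset : PreS d m k σ = {resW k σ} := by
      ext ξ
      simp only [PreS, Set.mem_setOf_eq, Set.mem_singleton_iff]
      constructor
      · rintro ⟨h1, h2⟩
        funext j
        rw [wk_fin ξ j, h2 j.1 (by omega)]
        rfl
      · rintro rfl
        refine ⟨hI, fun j hj => ?_⟩
        exact wk_resW (le_of_lt hk) σ j (by omega)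
    rw [hset, Set.ncard_singleton]
  · rw [if_neg hI]
    have hset : PreS d m k σ = ∅ := by
      ext ξ
      simp only [PreS, Set.mem_setOf_eq, Set.mem_empty_iff_false, iff_false]
      rintro ⟨h1, h2⟩
      apply hI
      have hres : resW k σ = ξ := by
        funext j
        show wk σ j.1 = ξ j
        rw [wk_fin ξ j, h2 j.1 (by omega)]
      rw [hres]
      exact h1
    rw [hset, Set.ncard_empty]

lemma trivial_mem_upsilon : (fun _ => 0 : Fin 1 → Fin d → ℤ) ∈ Upsilon d 0 := by
  rw [mem_upsilon_iff]
  exact ⟨fun i hi => by omega, fun a b ha hb hab => by omega, rfl,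
    fun j hj1 hj0 => by omega⟩

/-- Walks extending a non-walk don't exist. -/
lemma extS_empty {m N : ℕ} (hm : m ≤ N) (σ : Fin (m + 1) → Fin d → ℤ)
    (hσ : σ ∉ Upsilon d m) : ExtS d m N σ = ∅ := by
  rw [Set.eq_empty_iff_forall_notMem]
  intro ω h
  apply hσ
  have hup := (mem_upsilon_iff ω).1 h.1
  have hmatch := h.2
  rw [mem_upsilon_iff]
  refine ⟨fun i hi => ?_, fun a b ha hb hab => ?_, ?_, fun j hj1 hjm => ?_⟩
  · rw [← hmatch (i + 1) (by omega), ← hmatch i (by omega)]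
    exact hup.1 i (by omega)
  · rw [← hmatch a ha, ← hmatch b hb] at hab
    exact hup.2.1 a b (by omega) (by omega) hab
  · rw [← hmatch 0 (by omega)]
    exact hup.2.2.1
  · rw [← hmatch j hjm]
    exact hup.2.2.2 j hj1 (by omega)

lemma sufW_mem_upsilon_of_extS {m N k : ℕ} (hk : k ≤ m) (hm : m ≤ N)
    (σ : Fin (m + 1) → Fin d → ℤ)
    (h : (ExtS d (m - k) (N - k) (sufW k σ)).Nonempty) :
    sufW k σ ∈ Upsilon d (m - k) := by
  by_contra hno
  rw [extS_empty (by omega) _ hno] at h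
  exact Set.not_nonempty_empty h

end SAWProof

/-! ## Analytic part -/

namespace SAWProof

open Filter Set

/-- Real-valued walk count. -/
noncomputable def u (d N : ℕ) : ℝ := (upsilonCount d N : ℝ)

/-- Backward ratio `υ_{N-k}/υ_N`. -/
noncomputable def ψ (d k N : ℕ) : ℝ := u d (N - k) / u d N

/-- Number of walks with no renewal time at all. -/
noncomputable def tCount (d N : ℕ) : ℕ :=
  {ω : Fin (N + 1) → Fin d → ℤ | ω ∈ Upsilon d N ∧ ∀ j : ℕ, ¬ HasRenewalAt ω j}.ncard

/-- Kesten's hypotheses. -/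
structure Kesten (d : ℕ) (β : ℝ) : Prop where
  hd0 : 0 < d
  hβ : 1 < β
  h1 : ∑' j : ℕ, (lambdaCount d (j + 1) : ℝ) / β ^ (j + 1) = 1
  h2 : Tendsto (fun n : ℕ => (upsilonCount d (n + 2) : ℝ) / (upsilonCount d n : ℝ))
        atTop (nhds (β ^ 2))

variable {d : ℕ} {β : ℝ}

lemma u_pos (hd0 : 0 < d) (N : ℕ) : 0 < u d N := by
  unfold u
  exact_mod_cast upsilon_pos hd0 N

lemma u_nonneg (N : ℕ) : 0 ≤ u d N := Nat.cast_nonneg _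

lemma psi_nonneg (k N : ℕ) : 0 ≤ ψ d k N := div_nonneg (u_nonneg _) (u_nonneg _)

lemma psi_pos (hd0 : 0 < d) (k N : ℕ) : 0 < ψ d k N :=
  div_pos (u_pos hd0 _) (u_pos hd0 _)

/-- `(ExtS d M X τ).ncard = υ_X` when `M = 0` and `τ` starts at the origin. -/
lemma extS_zero_count {M X : ℕ} (hM : M = 0) (τ : Fin (M + 1) → Fin d → ℤ)
    (hτ0 : wk τ 0 = 0) : (ExtS d M X τ).ncard = upsilonCount d X := by
  subst hM
  rw [extS_zero_eq_upsilon τ hτ0]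
  rfl

lemma noRen_le_t (d m N : ℕ) (σ : Fin (m + 1) → Fin d → ℤ) :
    (NoRen d m N σ).ncard ≤ tCount d N :=
  Set.ncard_le_ncard (fun ω h => ⟨h.1.1, h.2⟩)
    (Set.Finite.subset (upsilon_finite d N) (fun ω h => h.1))

/-- Composition rule for backward ratios. -/
lemma psi_add (hd0 : 0 < d) (a b N : ℕ) :
    ψ d (a + b) N = ψ d a (N - b) * ψ d b N := by
  unfold ψ
  have hb : u d (N - b) ≠ 0 := ne_of_gt (u_pos hd0 _)
  rw [show N - b - a = N - (a + b) from by omega, div_mul_div_comm,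
    mul_comm (u d (N - (a + b))) (u d (N - b)), mul_div_mul_left _ _ hb]

lemma tendsto_shift_sub {f : ℕ → ℝ} {l : ℝ} (c : ℕ) (h : Tendsto f atTop (nhds l)) :
    Tendsto (fun N => f (N - c)) atTop (nhds l) :=
  h.comp (tendsto_sub_atTop_nat c)

lemma tendsto_shift_add {f : ℕ → ℝ} {l : ℝ} (c : ℕ) (h : Tendsto f atTop (nhds l)) :
    Tendsto (fun N => f (c + N)) atTop (nhds l) := by
  have h2 := h.comp (tendsto_add_atTop_nat c)
  exact h2.congr (fun N => by simp only [Function.comp_apply, Nat.add_comm N c])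

/-- The renewal identity `υ_N = t_N + Σ λ_k υ_{N-k}`. -/
lemma E1 (hN : 1 ≤ N) :
    (upsilonCount d N : ℝ)
      = (tCount d N : ℝ) + ∑ k ∈ Finset.Ico 1 N, (lambdaCount d k : ℝ) * u d (N - k) := by
  have hnr : (NoRen d 0 N (fun _ => 0 : Fin 1 → Fin d → ℤ)).ncard = tCount d N := by
    have hset : NoRen d 0 N (fun _ => 0 : Fin 1 → Fin d → ℤ)
        = {ω : Fin (N + 1) → Fin d → ℤ | ω ∈ Upsilon d N ∧ ∀ j : ℕ, ¬ HasRenewalAt ω j} := by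
      unfold NoRen
      rw [extS_zero_eq_upsilon (fun _ => 0) rfl]
    rw [hset]
    rfl
  have h := master (d := d) (m := 0) (N := N) (by omega) hN (fun _ => 0)
  rw [extS_zero_eq_upsilon (fun _ => 0) rfl, hnr] at h
  have hterm : ∀ k ∈ Finset.Ico 1 N,
      (PreS d 0 k (fun _ => 0 : Fin 1 → Fin d → ℤ)).ncard
          * (ExtS d (0 - k) (N - k) (sufW k (fun _ => 0 : Fin 1 → Fin d → ℤ))).ncard
        = lambdaCount d k * upsilonCount d (N - k) := by
    intro k hk
    rw [extS_zero_count (by omega) _ (sufW_zero _)]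
    congr 1
    rw [preS_zero k (fun _ => 0) rfl]
    rfl
  rw [Finset.sum_congr rfl hterm] at h
  have h' : upsilonCount d N
      = tCount d N + ∑ k ∈ Finset.Ico 1 N, lambdaCount d k * upsilonCount d (N - k) := h
  rw [h']
  unfold u
  push_cast
  ring

lemma sum_psi_le_one (hK : Kesten d β) {N : ℕ} (hN : 1 ≤ N) :
    (tCount d N : ℝ) / u d N + ∑ k ∈ Finset.Ico 1 N, (lambdaCount d k : ℝ) * ψ d k N = 1 := by
  have hu : u d N ≠ 0 := ne_of_gt (u_pos hK.hd0 N)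
  have hsum : ∑ k ∈ Finset.Ico 1 N, (lambdaCount d k : ℝ) * ψ d k N
      = (∑ k ∈ Finset.Ico 1 N, (lambdaCount d k : ℝ) * u d (N - k)) / u d N := by
    rw [Finset.sum_div]
    apply Finset.sum_congr rfl
    intro k _
    unfold ψ
    rw [mul_div_assoc]
  rw [hsum, ← add_div, ← E1 hN]
  show u d N / u d N = 1
  exact div_self hu

/-- Summability of `λ_{j+1} β^{-(j+1)}`. -/
lemma lambda_summable (hK : Kesten d β) :
    Summable (fun j : ℕ => (lambdaCount d (j + 1) : ℝ) * (β⁻¹) ^ (j + 1)) := by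
  have hfun : ∀ j : ℕ, (lambdaCount d (j + 1) : ℝ) / β ^ (j + 1)
      = (lambdaCount d (j + 1) : ℝ) * (β⁻¹) ^ (j + 1) := by
    intro j
    rw [div_eq_mul_inv, inv_pow]
  by_contra hns
  have h0 := tsum_eq_zero_of_not_summable hns
  have h1 := hK.h1
  simp only [hfun] at h1
  rw [h0] at h1
  norm_num at h1

lemma lambda_tsum_one (hK : Kesten d β) :
    ∑' j : ℕ, (lambdaCount d (j + 1) : ℝ) * (β⁻¹) ^ (j + 1) = 1 := by
  have hfun : ∀ j : ℕ, (lambdaCount d (j + 1) : ℝ) / β ^ (j + 1)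
      = (lambdaCount d (j + 1) : ℝ) * (β⁻¹) ^ (j + 1) := by
    intro j
    rw [div_eq_mul_inv, inv_pow]
  have h1 := hK.h1
  simp only [hfun] at h1
  exact h1

/-- Partial sums over `Ico 1 (K+1)` in terms of shifted range sums. -/
lemma partial_eq_range (g : ℕ → ℝ) (K : ℕ) :
    ∑ k ∈ Finset.Ico 1 (K + 1), g k = ∑ j ∈ Finset.range K, g (j + 1) := by
  rw [Finset.sum_Ico_eq_sum_range]
  simp only [Nat.add_sub_cancel]
  apply Finset.sum_congr rfl
  intro i _
  rw [Nat.add_comm 1 i]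

lemma lambda_partial_tendsto (hK : Kesten d β) :
    Tendsto (fun K : ℕ => ∑ k ∈ Finset.Ico 1 (K + 1), (lambdaCount d k : ℝ) * (β⁻¹) ^ k)
      atTop (nhds 1) := by
  have h := (lambda_summable hK).hasSum.tendsto_sum_nat
  rw [lambda_tsum_one hK] at h
  exact h.congr (fun K => (partial_eq_range (fun k => (lambdaCount d k : ℝ) * (β⁻¹) ^ k) K).symm)

/-- Even-gap ratio limits from `h2`. -/
lemma psi_even_tendsto (hK : Kesten d β) (j : ℕ) :
    Tendsto (fun N => ψ d (2 * j) N) atTop (nhds ((β⁻¹) ^ (2 * j))) := by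
  have hβ2 : (β : ℝ) ^ 2 ≠ 0 := by
    have : (0 : ℝ) < β := lt_trans one_pos hK.hβ
    positivity
  have hp2 : Tendsto (fun N => u d N / u d (N + 2)) atTop (nhds ((β⁻¹) ^ 2)) := by
    have h := hK.h2.inv₀ hβ2
    have heq : ∀ N : ℕ, ((upsilonCount d (N + 2) : ℝ) / (upsilonCount d N : ℝ))⁻¹
        = u d N / u d (N + 2) := fun N => by rw [inv_div]; rfl
    have hval : ((β : ℝ) ^ 2)⁻¹ = (β⁻¹) ^ 2 := by rw [inv_pow]
    rw [hval] at h
    exact h.congr heq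
  have hpsi2 : Tendsto (fun N => ψ d 2 N) atTop (nhds ((β⁻¹) ^ 2)) := by
    have h := (tendsto_shift_sub 2 hp2)
    apply h.congr'
    filter_upwards [eventually_ge_atTop 2] with N hN
    unfold ψ
    rw [show N - 2 + 2 = N from by omega]
  induction j with
  | zero =>
    simp only [Nat.mul_zero, pow_zero]
    have : ∀ N : ℕ, ψ d 0 N = 1 := by
      intro N
      unfold ψ
      rw [Nat.sub_zero]
      exact div_self (ne_of_gt (u_pos hK.hd0 N))
    rw [show (fun N => ψ d 0 N) = fun _ : ℕ => (1 : ℝ) from funext this]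
    exact tendsto_const_nhds
  | succ j ih =>
    have hid : ∀ N : ℕ, ψ d (2 * (j + 1)) N = ψ d (2 * j) (N - 2) * ψ d 2 N := by
      intro N
      rw [show 2 * (j + 1) = 2 * j + 2 from by ring]
      exact psi_add hK.hd0 (2 * j) 2 N
    have hlim : Tendsto (fun N => ψ d (2 * j) (N - 2) * ψ d 2 N) atTop
        (nhds ((β⁻¹) ^ (2 * j) * (β⁻¹) ^ 2)) := (tendsto_shift_sub 2 ih).mul hpsi2
    rw [show (β⁻¹ : ℝ) ^ (2 * (j + 1)) = (β⁻¹) ^ (2 * j) * (β⁻¹) ^ 2 from by ring]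
    exact hlim.congr (fun N => (hid N).symm)

lemma partial_sum_le (hK : Kesten d β) {K N : ℕ} (hKN : K + 1 ≤ N) :
    ∑ k ∈ Finset.Ico 1 (K + 1), (lambdaCount d k : ℝ) * ψ d k N ≤ 1 := by
  have h := sum_psi_le_one hK (show 1 ≤ N from by omega)
  have hsub : ∑ k ∈ Finset.Ico 1 (K + 1), (lambdaCount d k : ℝ) * ψ d k N
      ≤ ∑ k ∈ Finset.Ico 1 N, (lambdaCount d k : ℝ) * ψ d k N := by
    apply Finset.sum_le_sum_of_subset_of_nonneg (Finset.Ico_subset_Ico le_rfl (by omega))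
    intro k _ _
    exact mul_nonneg (Nat.cast_nonneg _) (psi_nonneg _ _)
  have ht : 0 ≤ (tCount d N : ℝ) / u d N := div_nonneg (Nat.cast_nonneg _) (u_nonneg _)
  linarith

lemma psi_one_upper (hK : Kesten d β) {ε : ℝ} (hε : 0 < ε) :
    ∀ᶠ N in atTop, ψ d 1 N ≤ β⁻¹ + ε := by
  have hβpos : (0 : ℝ) < β := lt_trans one_pos hK.hβ
  obtain ⟨K, hPK, hK1⟩ : ∃ K : ℕ,
      (1 - ε < ∑ k ∈ Finset.Ico 1 (K + 1), (lambdaCount d k : ℝ) * (β⁻¹) ^ k) ∧ 1 ≤ K := by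
    have h := (lambda_partial_tendsto hK).eventually
      (eventually_gt_nhds (by linarith : 1 - ε < 1))
    exact (h.and (eventually_ge_atTop 1)).exists
  set so := (Finset.Ico 1 (K + 1)).filter (fun k => Odd k) with hso
  set se := (Finset.Ico 1 (K + 1)).filter (fun k => ¬ Odd k) with hse
  set LA := ∑ k ∈ so, (lambdaCount d k : ℝ) * (β⁻¹) ^ (k - 1) with hLA
  set LB := ∑ k ∈ se, (lambdaCount d k : ℝ) * (β⁻¹) ^ k with hLB
  have hbinvpos : (0 : ℝ) < β⁻¹ := by positivity
  have hLA1 : 1 ≤ LA := by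
    have h1mem : 1 ∈ so := by
      rw [hso, Finset.mem_filter, Finset.mem_Ico]
      exact ⟨⟨le_refl 1, by omega⟩, odd_one⟩
    have hterm : (1 : ℝ) ≤ (lambdaCount d 1 : ℝ) * (β⁻¹) ^ (1 - 1) := by
      norm_num
      exact_mod_cast lambda_one_pos hK.hd0
    calc (1 : ℝ) ≤ (lambdaCount d 1 : ℝ) * (β⁻¹) ^ (1 - 1) := hterm
      _ ≤ LA := Finset.single_le_sum
          (f := fun k => (lambdaCount d k : ℝ) * (β⁻¹) ^ (k - 1))
          (fun k _ => by positivity) h1mem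
  have hsum_split : β⁻¹ * LA + LB
      = ∑ k ∈ Finset.Ico 1 (K + 1), (lambdaCount d k : ℝ) * (β⁻¹) ^ k := by
    rw [hLA, Finset.mul_sum]
    rw [Finset.sum_congr rfl (g := fun k => (lambdaCount d k : ℝ) * (β⁻¹) ^ k)
      (fun k hk => ?_)]
    · rw [hLB, hso, hse]
      exact Finset.sum_filter_add_sum_filter_not _ _ _
    · rw [hso, Finset.mem_filter, Finset.mem_Ico] at hk
      have hk1 : k - 1 + 1 = k := by omega
      calc β⁻¹ * ((lambdaCount d k : ℝ) * (β⁻¹) ^ (k - 1))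
          = (lambdaCount d k : ℝ) * ((β⁻¹) ^ (k - 1) * β⁻¹) := by ring
        _ = (lambdaCount d k : ℝ) * (β⁻¹) ^ (k - 1 + 1) := by rw [pow_succ]
        _ = (lambdaCount d k : ℝ) * (β⁻¹) ^ k := by rw [hk1]
  set A := fun N : ℕ => ∑ k ∈ so, (lambdaCount d k : ℝ) * ψ d (k - 1) (N - 1) with hA
  set B := fun N : ℕ => ∑ k ∈ se, (lambdaCount d k : ℝ) * ψ d k N with hB
  have hAtend : Tendsto A atTop (nhds LA) := by
    rw [hA, hLA]
    apply tendsto_finset_sum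
    intro k hk
    rw [hso, Finset.mem_filter] at hk
    have heven : Even (k - 1) := Nat.Odd.sub_odd hk.2 odd_one
    obtain ⟨j, hj⟩ := heven
    have h2j : k - 1 = 2 * j := by omega
    have hlim := psi_even_tendsto hK j
    rw [← h2j] at hlim
    exact Tendsto.const_mul _ (tendsto_shift_sub 1 hlim)
  have hBtend : Tendsto B atTop (nhds LB) := by
    rw [hB, hLB]
    apply tendsto_finset_sum
    intro k hk
    rw [hse, Finset.mem_filter] at hk
    have heven : Even k := Nat.not_odd_iff_even.mp hk.2
    obtain ⟨j, hj⟩ := heven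
    have h2j : k = 2 * j := by omega
    have hlim := psi_even_tendsto hK j
    rw [← h2j] at hlim
    exact Tendsto.const_mul _ hlim
  have hineq : ∀ᶠ N in atTop, ψ d 1 N * A N + B N ≤ 1 := by
    filter_upwards [eventually_ge_atTop (K + 2)] with N hN
    have hxA : ψ d 1 N * A N = ∑ k ∈ so, (lambdaCount d k : ℝ) * ψ d k N := by
      rw [hA, Finset.mul_sum]
      apply Finset.sum_congr rfl
      intro k hk
      rw [hso, Finset.mem_filter, Finset.mem_Ico] at hk
      have hpsik : ψ d k N = ψ d (k - 1) (N - 1) * ψ d 1 N := by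
        have h := psi_add hK.hd0 (k - 1) 1 N
        rw [show k - 1 + 1 = k from by omega] at h
        exact h
      rw [hpsik]
      ring
    rw [hxA, hB]
    rw [hso, hse, Finset.sum_filter_add_sum_filter_not (Finset.Ico 1 (K + 1)) (fun k => Odd k)
      (fun k => (lambdaCount d k : ℝ) * ψ d k N)]
    exact partial_sum_le hK (by omega)
  have hgap : (1 : ℝ) < (β⁻¹ + ε) * LA + LB := by
    have hre : (β⁻¹ + ε) * LA + LB = (β⁻¹ * LA + LB) + ε * LA := by ring
    rw [hre, hsum_split]
    nlinarith
  have hev : ∀ᶠ N in atTop, 1 < (β⁻¹ + ε) * A N + B N := by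
    have htend : Tendsto (fun N => (β⁻¹ + ε) * A N + B N) atTop
        (nhds ((β⁻¹ + ε) * LA + LB)) := (hAtend.const_mul _).add hBtend
    exact htend.eventually (eventually_gt_nhds hgap)
  have hApos : ∀ᶠ N in atTop, 0 < A N :=
    hAtend.eventually (eventually_gt_nhds (by linarith : (0 : ℝ) < LA))
  filter_upwards [hineq, hev, hApos] with N h1 h2 h3
  nlinarith

/-- The one-step ratio limit. -/
lemma psi_one_tendsto (hK : Kesten d β) :
    Tendsto (fun N => ψ d 1 N) atTop (nhds β⁻¹) := by
  have hβpos : (0 : ℝ) < β := lt_trans one_pos hK.hβ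
  have hbinvpos : (0 : ℝ) < β⁻¹ := by positivity
  have lower : ∀ ε : ℝ, 0 < ε → ∀ᶠ N in atTop, β⁻¹ - ε ≤ ψ d 1 N := by
    intro ε hε
    rcases le_or_gt β⁻¹ ε with hc | hc
    · filter_upwards with N
      have := psi_nonneg (d := d) 1 N
      linarith
    · have hup := psi_one_upper hK hε
      have hup' : ∀ᶠ N in atTop, ψ d 1 (N - 1) ≤ β⁻¹ + ε :=
        (tendsto_sub_atTop_nat 1).eventually hup
      have h2 : Tendsto (fun N => ψ d 2 N) atTop (nhds ((β⁻¹) ^ 2)) :=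
        psi_even_tendsto hK 1
      have hev2 : ∀ᶠ N in atTop, (β⁻¹) ^ 2 - ε ^ 2 < ψ d 2 N := by
        apply h2.eventually (eventually_gt_nhds ?_)
        nlinarith
      filter_upwards [hup', hev2] with N h1 h2'
      have hid : ψ d 2 N = ψ d 1 (N - 1) * ψ d 1 N := psi_add hK.hd0 1 1 N
      have hpos1 : 0 < ψ d 1 (N - 1) := psi_pos hK.hd0 1 (N - 1)
      by_contra hcon
      push_neg at hcon
      have hstep1 : ψ d 1 (N - 1) * ψ d 1 N ≤ ψ d 1 (N - 1) * (β⁻¹ - ε) :=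
        mul_le_mul_of_nonneg_left (le_of_lt hcon) hpos1.le
      have hstep2 : ψ d 1 (N - 1) * (β⁻¹ - ε) ≤ (β⁻¹ + ε) * (β⁻¹ - ε) :=
        mul_le_mul_of_nonneg_right h1 (by linarith)
      have hring : (β⁻¹ + ε) * (β⁻¹ - ε) = (β⁻¹) ^ 2 - ε ^ 2 := by ring
      rw [hid] at h2'
      linarith
  rw [Metric.tendsto_atTop]
  intro ε hε
  have hu := psi_one_upper hK (show 0 < ε / 2 by linarith)
  have hl := lower (ε / 2) (by linarith)
  obtain ⟨N₀, hN₀⟩ := eventually_atTop.1 (hu.and hl)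
  refine ⟨N₀, fun n hn => ?_⟩
  obtain ⟨h1, h2⟩ := hN₀ n hn
  rw [Real.dist_eq, abs_sub_lt_iff]
  constructor <;> linarith

lemma psi_tendsto (hK : Kesten d β) (k : ℕ) :
    Tendsto (fun N => ψ d k N) atTop (nhds ((β⁻¹) ^ k)) := by
  induction k with
  | zero =>
    simp only [pow_zero]
    have hψ0 : ∀ N : ℕ, ψ d 0 N = 1 := fun N => by
      unfold ψ
      rw [Nat.sub_zero]
      exact div_self (ne_of_gt (u_pos hK.hd0 N))
    exact tendsto_const_nhds.congr (fun N => (hψ0 N).symm)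
  | succ k ih =>
    have hid : ∀ N : ℕ, ψ d (k + 1) N = ψ d k (N - 1) * ψ d 1 N :=
      fun N => psi_add hK.hd0 k 1 N
    have hlim := (tendsto_shift_sub 1 ih).mul (psi_one_tendsto hK)
    rw [show (β⁻¹ : ℝ) ^ (k + 1) = (β⁻¹) ^ k * β⁻¹ from by ring]
    exact hlim.congr (fun N => (hid N).symm)

lemma D_tendsto (hK : Kesten d β) :
    Tendsto (fun N => ∑ k ∈ Finset.Ico 1 N, (lambdaCount d k : ℝ) * ψ d k N)
      atTop (nhds 1) := by
  rw [Metric.tendsto_atTop]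
  intro ε hε
  set PK := fun K : ℕ => ∑ k ∈ Finset.Ico 1 (K + 1), (lambdaCount d k : ℝ) * (β⁻¹) ^ k with hPKdef
  obtain ⟨K, hPK⟩ := ((lambda_partial_tendsto hK).eventually
    (eventually_gt_nhds (show 1 - ε / 2 < 1 by linarith))).exists
  have hpart : Tendsto (fun N => ∑ k ∈ Finset.Ico 1 (K + 1), (lambdaCount d k : ℝ) * ψ d k N)
      atTop (nhds (PK K)) := by
    apply tendsto_finset_sum
    intro k _
    exact Tendsto.const_mul _ (psi_tendsto hK k)
  have hev := hpart.eventually (eventually_gt_nhds (show PK K - ε / 2 < PK K by linarith))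
  obtain ⟨N₀, hN₀⟩ := eventually_atTop.1 (hev.and (eventually_ge_atTop (K + 2)))
  refine ⟨N₀, fun N hN => ?_⟩
  obtain ⟨h1, h2⟩ := hN₀ N hN
  have hD_le : ∑ k ∈ Finset.Ico 1 N, (lambdaCount d k : ℝ) * ψ d k N ≤ 1 := by
    have h := sum_psi_le_one hK (show 1 ≤ N by omega)
    have ht : 0 ≤ (tCount d N : ℝ) / u d N := div_nonneg (Nat.cast_nonneg _) (u_nonneg _)
    linarith
  have hD_ge : ∑ k ∈ Finset.Ico 1 (K + 1), (lambdaCount d k : ℝ) * ψ d k N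
      ≤ ∑ k ∈ Finset.Ico 1 N, (lambdaCount d k : ℝ) * ψ d k N := by
    apply Finset.sum_le_sum_of_subset_of_nonneg (Finset.Ico_subset_Ico le_rfl (by omega))
    intro k _ _
    exact mul_nonneg (Nat.cast_nonneg _) (psi_nonneg _ _)
  rw [Real.dist_eq, abs_sub_lt_iff]
  constructor <;> linarith

lemma t_frac_tendsto (hK : Kesten d β) :
    Tendsto (fun N => (tCount d N : ℝ) / u d N) atTop (nhds 0) := by
  have h := (tendsto_const_nhds (x := (1 : ℝ)) (f := atTop)).sub (D_tendsto hK)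
  rw [sub_self] at h
  apply h.congr'
  filter_upwards [eventually_ge_atTop 1] with N hN
  have := sum_psi_le_one hK hN
  linarith

/-- Dominated convergence for weighted backward-ratio sums. -/
lemma weighted_tendsto (hK : Kesten d β) (c : ℕ → ℝ)
    (hc0 : ∀ k, 0 ≤ c k) (hcle : ∀ k, c k ≤ (lambdaCount d k : ℝ)) :
    Tendsto (fun N => ∑ k ∈ Finset.Ico 1 N, c k * ψ d k N)
      atTop (nhds (∑' j : ℕ, c (j + 1) * (β⁻¹) ^ (j + 1))) := by
  have hβpos : (0 : ℝ) < β := lt_trans one_pos hK.hβ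
  have hsummc : Summable (fun j : ℕ => c (j + 1) * (β⁻¹) ^ (j + 1)) := by
    apply Summable.of_nonneg_of_le (fun j => mul_nonneg (hc0 _) (by positivity))
      (fun j => mul_le_mul_of_nonneg_right (hcle _) (by positivity)) (lambda_summable hK)
  set S := ∑' j : ℕ, c (j + 1) * (β⁻¹) ^ (j + 1) with hS
  rw [Metric.tendsto_atTop]
  intro ε hε
  have hcpart : Tendsto (fun K : ℕ => ∑ k ∈ Finset.Ico 1 (K + 1), c k * (β⁻¹) ^ k)
      atTop (nhds S) := by
    have h := hsummc.hasSum.tendsto_sum_nat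
    exact h.congr (fun K => (partial_eq_range (fun k => c k * (β⁻¹) ^ k) K).symm)
  obtain ⟨K, hK1, hK2⟩ := ((hcpart.eventually
      (eventually_gt_nhds (show S - ε / 4 < S by linarith))).and
    ((lambda_partial_tendsto hK).eventually
      (eventually_gt_nhds (show 1 - ε / 4 < 1 by linarith)))).exists
  have hfin1 : Tendsto (fun N => ∑ k ∈ Finset.Ico 1 (K + 1), c k * ψ d k N) atTop
      (nhds (∑ k ∈ Finset.Ico 1 (K + 1), c k * (β⁻¹) ^ k)) := by
    apply tendsto_finset_sum
    intro k _
    exact Tendsto.const_mul _ (psi_tendsto hK k)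
  have hfin2 : Tendsto (fun N => ∑ k ∈ Finset.Ico 1 (K + 1), (lambdaCount d k : ℝ) * ψ d k N)
      atTop (nhds (∑ k ∈ Finset.Ico 1 (K + 1), (lambdaCount d k : ℝ) * (β⁻¹) ^ k)) := by
    apply tendsto_finset_sum
    intro k _
    exact Tendsto.const_mul _ (psi_tendsto hK k)
  have e1 := (Metric.tendsto_nhds.mp hfin1) (ε / 4) (by linarith)
  have e2 := hfin2.eventually (eventually_gt_nhds
    (show 1 - ε / 2 < ∑ k ∈ Finset.Ico 1 (K + 1), (lambdaCount d k : ℝ) * (β⁻¹) ^ k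
      by linarith))
  rw [Filter.eventually_atTop] at e1 e2
  obtain ⟨N1, hN1⟩ := e1
  obtain ⟨N2, hN2⟩ := e2
  refine ⟨max (max N1 N2) (K + 2), fun N hN => ?_⟩
  have hNN1 := hN1 N (by omega)
  have hNN2 := hN2 N (by omega)
  have hNK : K + 2 ≤ N := by omega
  have hsplit : ∑ k ∈ Finset.Ico 1 N, c k * ψ d k N
      = ∑ k ∈ Finset.Ico 1 (K + 1), c k * ψ d k N
        + ∑ k ∈ Finset.Ico (K + 1) N, c k * ψ d k N :=
    (Finset.sum_Ico_consecutive _ (by omega) (by omega)).symm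
  have hlsplit : ∑ k ∈ Finset.Ico 1 (K + 1), (lambdaCount d k : ℝ) * ψ d k N
        + ∑ k ∈ Finset.Ico (K + 1) N, (lambdaCount d k : ℝ) * ψ d k N
      = ∑ k ∈ Finset.Ico 1 N, (lambdaCount d k : ℝ) * ψ d k N :=
    Finset.sum_Ico_consecutive _ (by omega) (by omega)
  have hDle : ∑ k ∈ Finset.Ico 1 N, (lambdaCount d k : ℝ) * ψ d k N ≤ 1 := by
    have h := sum_psi_le_one hK (show 1 ≤ N by omega)
    have ht : 0 ≤ (tCount d N : ℝ) / u d N := div_nonneg (Nat.cast_nonneg _) (u_nonneg _)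
    linarith
  have htail_le : ∑ k ∈ Finset.Ico (K + 1) N, c k * ψ d k N
      ≤ ∑ k ∈ Finset.Ico (K + 1) N, (lambdaCount d k : ℝ) * ψ d k N :=
    Finset.sum_le_sum (fun k _ => mul_le_mul_of_nonneg_right (hcle k) (psi_nonneg _ _))
  have htail0 : 0 ≤ ∑ k ∈ Finset.Ico (K + 1) N, c k * ψ d k N :=
    Finset.sum_nonneg (fun k _ => mul_nonneg (hc0 k) (psi_nonneg _ _))
  have hcK_le_S : ∑ k ∈ Finset.Ico 1 (K + 1), c k * (β⁻¹) ^ k ≤ S := by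
    rw [partial_eq_range]
    exact Summable.sum_le_tsum (Finset.range K)
      (fun j _ => mul_nonneg (hc0 _) (by positivity)) hsummc
  rw [Real.dist_eq] at hNN1 ⊢
  have h1' := abs_lt.mp hNN1
  rw [hsplit, abs_lt]
  constructor <;> linarith

lemma div_chain {a b c : ℝ} (hb : b ≠ 0) : a / c = a / b * (b / c) := by
  rw [div_mul_div_comm, mul_comm a b, mul_div_mul_left _ _ hb]

lemma extS_ncard_congr {d m X Y : ℕ} (h : X = Y) (σ : Fin (m + 1) → Fin d → ℤ) :
    (ExtS d m X σ).ncard = (ExtS d m Y σ).ncard := by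
  subst h
  rfl

/-- Main induction: existence of the cylinder limit. -/
lemma main_aux (hK : Kesten d β) :
    ∀ m : ℕ, ∀ σ : Fin (m + 1) → Fin d → ℤ, σ ∈ Upsilon d m →
      ∃ L : ℝ, Tendsto (fun n : ℕ => ((ExtS d m (m + n) σ).ncard : ℝ) / u d (m + n))
        atTop (nhds L) := by
  intro m
  induction m using Nat.strong_induction_on with
  | _ m ih =>
  intro σ hσ
  set p := max 1 m with hp
  -- limits for the middle terms
  have hmid : ∀ k : ℕ, ∃ Lk : ℝ, 1 ≤ k → k < m →
      Tendsto (fun n : ℕ =>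
          ((ExtS d (m - k) (m + n - k) (sufW k σ)).ncard : ℝ) / u d (m + n))
        atTop (nhds Lk) := by
    intro k
    by_cases hkm : 1 ≤ k ∧ k < m
    · obtain ⟨hk1, hklt⟩ := hkm
      by_cases hup : sufW k σ ∈ Upsilon d (m - k)
      · obtain ⟨Lk, hLk⟩ := ih (m - k) (by omega) (sufW k σ) hup
        refine ⟨Lk * (β⁻¹) ^ k, fun _ _ => ?_⟩
        have hcongr : ∀ n : ℕ, ((ExtS d (m - k) (m + n - k) (sufW k σ)).ncard : ℝ)
            = ((ExtS d (m - k) ((m - k) + n) (sufW k σ)).ncard : ℝ) :=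
          fun n => by rw [extS_ncard_congr (show m + n - k = (m - k) + n by omega)]
        have hfac : ∀ n : ℕ,
            ((ExtS d (m - k) ((m - k) + n) (sufW k σ)).ncard : ℝ) / u d (m + n)
              = (((ExtS d (m - k) ((m - k) + n) (sufW k σ)).ncard : ℝ) / u d ((m - k) + n))
                * ψ d k (m + n) := by
          intro n
          have hb : u d ((m - k) + n) ≠ 0 := ne_of_gt (u_pos hK.hd0 _)
          have hψeq : ψ d k (m + n) = u d ((m - k) + n) / u d (m + n) := by
            unfold ψ
            rw [show m + n - k = (m - k) + n from by omega]
          rw [hψeq]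
          exact div_chain hb
        have hψshift : Tendsto (fun n : ℕ => ψ d k (m + n)) atTop (nhds ((β⁻¹) ^ k)) :=
          tendsto_shift_add m (psi_tendsto hK k)
        apply ((hLk.mul hψshift).congr (fun n => (hfac n).symm)).congr
        intro n
        rw [hcongr n]
      · refine ⟨0, fun hk1 hklt => ?_⟩
        have hzero : ∀ n : ℕ,
            ((ExtS d (m - k) (m + n - k) (sufW k σ)).ncard : ℝ) / u d (m + n) = 0 := by
          intro n
          rw [extS_empty (by omega) _ hup, Set.ncard_empty]
          norm_num
        exact tendsto_const_nhds.congr (fun n => (hzero n).symm)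
    · exact ⟨0, fun h1 h2 => absurd ⟨h1, h2⟩ hkm⟩
  choose Lmid hLmid using hmid
  -- the tail coefficients
  set c : ℕ → ℝ := fun k => if p ≤ k then ((PreS d m k σ).ncard : ℝ) else 0 with hc
  have hc0 : ∀ k, 0 ≤ c k := by
    intro k
    rw [hc]
    dsimp only
    split
    · exact Nat.cast_nonneg _
    · exact le_refl 0
  have hcle : ∀ k, c k ≤ (lambdaCount d k : ℝ) := by
    intro k
    rw [hc]
    dsimp only
    split
    · exact_mod_cast preS_le_lambda d m k σ
    · exact Nat.cast_nonneg _
  set S := ∑' j : ℕ, c (j + 1) * (β⁻¹) ^ (j + 1) with hS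
  have htail' : Tendsto (fun n : ℕ => ∑ k ∈ Finset.Ico 1 (m + n), c k * ψ d k (m + n))
      atTop (nhds S) := tendsto_shift_add m (weighted_tendsto hK c hc0 hcle)
  -- the no-renewal term
  have hF0 : Tendsto (fun n : ℕ => ((NoRen d m (m + n) σ).ncard : ℝ) / u d (m + n))
      atTop (nhds 0) := by
    have htu : Tendsto (fun n : ℕ => (tCount d (m + n) : ℝ) / u d (m + n)) atTop (nhds 0) :=
      tendsto_shift_add m (t_frac_tendsto hK)
    apply tendsto_of_tendsto_of_tendsto_of_le_of_le tendsto_const_nhds htu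
    · intro n
      exact div_nonneg (Nat.cast_nonneg _) (u_nonneg _)
    · intro n
      have hu := u_pos hK.hd0 (m + n)
      have hle : ((NoRen d m (m + n) σ).ncard : ℝ) ≤ (tCount d (m + n) : ℝ) := by
        exact_mod_cast noRen_le_t d m (m + n) σ
      have hinv : (0:ℝ) ≤ (u d (m + n))⁻¹ := le_of_lt (inv_pos.mpr hu)
      have hmul := mul_le_mul_of_nonneg_right hle hinv
      rw [← div_eq_mul_inv, ← div_eq_mul_inv] at hmul
      exact hmul
  -- the middle sum
  have hmidsum : Tendsto (fun n : ℕ => ∑ k ∈ Finset.Ico 1 p, ((PreS d m k σ).ncard : ℝ)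
      * (((ExtS d (m - k) (m + n - k) (sufW k σ)).ncard : ℝ) / u d (m + n))) atTop
      (nhds (∑ k ∈ Finset.Ico 1 p, ((PreS d m k σ).ncard : ℝ) * Lmid k)) := by
    apply tendsto_finset_sum
    intro k hk
    rw [Finset.mem_Ico] at hk
    have hklt : k < m := by omega
    exact Tendsto.const_mul _ (hLmid k hk.1 hklt)
  refine ⟨0 + (∑ k ∈ Finset.Ico 1 p, ((PreS d m k σ).ncard : ℝ) * Lmid k) + S, ?_⟩
  have htotal := (hF0.add hmidsum).add htail'
  apply htotal.congr'
  filter_upwards [eventually_ge_atTop 1] with n hn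
  -- the master identity, cast to ℝ and divided by u
  have hmast := master (d := d) (show m ≤ m + n by omega) (show 1 ≤ m + n by omega) σ
  have hcast := congrArg (fun z : ℕ => (z : ℝ)) hmast
  push_cast at hcast
  have hp1 : 1 ≤ p := by omega
  have hpN : p ≤ m + n := by omega
  have hmid_eq : ∑ k ∈ Finset.Ico 1 p, ((PreS d m k σ).ncard : ℝ)
        * (((ExtS d (m - k) (m + n - k) (sufW k σ)).ncard : ℝ) / u d (m + n))
      = ∑ k ∈ Finset.Ico 1 p, ((PreS d m k σ).ncard : ℝ)
        * ((ExtS d (m - k) (m + n - k) (sufW k σ)).ncard : ℝ) / u d (m + n) := by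
    apply Finset.sum_congr rfl
    intro k _
    rw [mul_div_assoc]
  have htail_eq : ∑ k ∈ Finset.Ico 1 (m + n), c k * ψ d k (m + n)
      = ∑ k ∈ Finset.Ico p (m + n), ((PreS d m k σ).ncard : ℝ)
        * ((ExtS d (m - k) (m + n - k) (sufW k σ)).ncard : ℝ) / u d (m + n) := by
    rw [← Finset.sum_Ico_consecutive (fun k => c k * ψ d k (m + n)) hp1 hpN]
    have hz : ∑ k ∈ Finset.Ico 1 p, c k * ψ d k (m + n) = 0 := by
      apply Finset.sum_eq_zero
      intro k hk
      rw [Finset.mem_Ico] at hk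
      rw [hc]
      dsimp only
      rw [if_neg (by omega)]
      ring
    rw [hz, zero_add]
    apply Finset.sum_congr rfl
    intro k hk
    rw [Finset.mem_Ico] at hk
    have hkm : m ≤ k := by omega
    have hE : ((ExtS d (m - k) (m + n - k) (sufW k σ)).ncard : ℝ) = u d (m + n - k) := by
      rw [extS_zero_count (show m - k = 0 by omega) _ (sufW_zero σ)]
      rfl
    rw [hc]
    dsimp only
    rw [if_pos (by omega)]
    rw [hE]
    unfold ψ
    rw [mul_div_assoc]
  calc ((NoRen d m (m + n) σ).ncard : ℝ) / u d (m + n)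
        + (∑ k ∈ Finset.Ico 1 p, ((PreS d m k σ).ncard : ℝ)
          * (((ExtS d (m - k) (m + n - k) (sufW k σ)).ncard : ℝ) / u d (m + n)))
        + (∑ k ∈ Finset.Ico 1 (m + n), c k * ψ d k (m + n))
      = ((NoRen d m (m + n) σ).ncard : ℝ) / u d (m + n)
        + ((∑ k ∈ Finset.Ico 1 p, ((PreS d m k σ).ncard : ℝ)
            * ((ExtS d (m - k) (m + n - k) (sufW k σ)).ncard : ℝ) / u d (m + n))
          + (∑ k ∈ Finset.Ico p (m + n), ((PreS d m k σ).ncard : ℝ)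
            * ((ExtS d (m - k) (m + n - k) (sufW k σ)).ncard : ℝ) / u d (m + n))) := by
        rw [hmid_eq, htail_eq]
        ring
    _ = ((NoRen d m (m + n) σ).ncard : ℝ) / u d (m + n)
        + (∑ k ∈ Finset.Ico 1 (m + n), ((PreS d m k σ).ncard : ℝ)
            * ((ExtS d (m - k) (m + n - k) (sufW k σ)).ncard : ℝ) / u d (m + n)) := by
        rw [Finset.sum_Ico_consecutive
          (fun k => ((PreS d m k σ).ncard : ℝ)
            * ((ExtS d (m - k) (m + n - k) (sufW k σ)).ncard : ℝ) / u d (m + n)) hp1 hpN]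
    _ = (((NoRen d m (m + n) σ).ncard : ℝ)
        + ∑ k ∈ Finset.Ico 1 (m + n), ((PreS d m k σ).ncard : ℝ)
            * ((ExtS d (m - k) (m + n - k) (sufW k σ)).ncard : ℝ)) / u d (m + n) := by
        rw [add_div, Finset.sum_div]
    _ = ((ExtS d m (m + n) σ).ncard : ℝ) / u d (m + n) := by
        rw [← hcast]

end SAWProof

/-- Existence of the infinite half-space self-avoiding walk: under Kesten's
relations (`β > 1`, `Σ_{j≥1} λ_j β^{−j} = 1`, `υ_{n+2}/υ_n → β²`), for every
`m ≥ 0` and every `σ ∈ Υ_m` the limit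
`Q⁺(σ) = lim_{n→∞} #{ω ∈ Υ_n : ω_j = σ_j for 0 ≤ j ≤ m}/υ_n` exists;
that is, the uniform measures on `Υ_n` converge on cylinder sets. -/
theorem infinite_halfspace_saw_exists (d : ℕ) (hd : 2 ≤ d) (β : ℝ) (hβ : 1 < β)
    (h1 : ∑' j : ℕ, (lambdaCount d (j + 1) : ℝ) / β ^ (j + 1) = 1)
    (h2 : Filter.Tendsto (fun n : ℕ => (upsilonCount d (n + 2) : ℝ) / (upsilonCount d n : ℝ))
      Filter.atTop (nhds (β ^ 2)))
    (m : ℕ) (σ : Fin (m + 1) → Fin d → ℤ) (hσ : σ ∈ Upsilon d m) :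
    ∃ L : ℝ, Filter.Tendsto
      (fun n : ℕ =>
        (Set.ncard {ω : Fin (m + n + 1) → Fin d → ℤ | ω ∈ Upsilon d (m + n) ∧
            ∀ j : Fin (m + 1), ω (Fin.castLE (by omega) j) = σ j} : ℝ)
          / (upsilonCount d (m + n) : ℝ))
      Filter.atTop (nhds L) := by
  have hK : SAWProof.Kesten d β := ⟨by omega, hβ, h1, h2⟩
  obtain ⟨L, hL⟩ := SAWProof.main_aux hK m σ hσ
  refine ⟨L, hL.congr (fun n => ?_)⟩
  have hset : SAWProof.ExtS d m (m + n) σ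
      = {ω : Fin (m + n + 1) → Fin d → ℤ | ω ∈ Upsilon d (m + n) ∧
          ∀ j : Fin (m + 1), ω (Fin.castLE (by omega) j) = σ j} := by
    ext ω
    simp only [SAWProof.ExtS, Set.mem_setOf_eq]
    constructor
    · rintro ⟨h1', h2'⟩
      refine ⟨h1', fun j => ?_⟩
      have := h2' j.1 (by omega)
      rw [SAWProof.wk_eq _ _ (by omega), SAWProof.wk_eq _ _ (by omega)] at this
      exact this
    · rintro ⟨h1', h2'⟩
      refine ⟨h1', fun j hj => ?_⟩
      rw [SAWProof.wk_eq _ _ (by omega), SAWProof.wk_eq _ _ (by omega)]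
      exact h2' ⟨j, by omega⟩
  rw [hset]
  rfl
end
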